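/- arXiv:2407.09258 — 9 statements merged into one kernel-verified Lean document; each statement's English description precedes it below -/
import Mathlib

section
/- Let X be a continuum and let A be a subcontinuum of X. Then A is a subcontinuum of colocal connectedness of X if and only if X \ A is strongly continuumwise connected. -/
open Set Metric

/-- A subcontinuum of a space `Z`: a nonempty compact connected subset. -/
def IsSubcontinuum {Z : Type*} [TopologicalSpace Z] (S : Set Z) : Prop :=
  IsCompact S ∧ IsConnected S

/-- `A` is a subcontinuum of colocal connectedness of the ambient space: for every
open `U ⊇ A` there is an open `V` with `A ⊆ V ⊆ U` whose complement is connected. -/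
def IsColocallyConnected {Z : Type*} [TopologicalSpace Z] (A : Set Z) : Prop :=
  ∀ U : Set Z, IsOpen U → A ⊆ U →
    ∃ V : Set Z, IsOpen V ∧ A ⊆ V ∧ V ⊆ U ∧ IsPreconnected Vᶜ

/-- The complement of `A` is strongly continuumwise connected: any two points of
`Aᶜ` lie in the interior of a subcontinuum contained in `Aᶜ`. -/
def ComplStronglyCWConnected {Z : Type*} [TopologicalSpace Z] (A : Set Z) : Prop :=
  ∀ x₁ ∈ Aᶜ, ∀ x₂ ∈ Aᶜ, ∃ W : Set Z,
    IsSubcontinuum W ∧ W ⊆ Aᶜ ∧ x₁ ∈ interior W ∧ x₂ ∈ interior W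

/-! Given `x₁, x₂ ∉ A`, regularity gives closed neighbourhoods `N₁, N₂` of them missing `A`;
colocal connectedness applied to `U = (N₁ ∪ N₂)ᶜ` yields `V ⊇ A` whose complement is a
continuum containing `N₁ ∪ N₂`. Conversely, for open `U ⊇ A`, the interiors of continua in
`X \ A` joining a fixed point of `X \ U` to the other points of `X \ U` cover this compact set;
finitely many of them form a connected compact `K ⊆ X \ A`, and `V = X \ K` works. -/

section

variable {X : Type*} [TopologicalSpace X] {A : Set X}

theorem IsColocallyConnected.complStronglyCWConnected [RegularSpace X] [CompactSpace X]
    (hAc : IsClosed A) (h : IsColocallyConnected A) : ComplStronglyCWConnected A := by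
  intro x₁ hx₁ x₂ hx₂
  obtain ⟨N₁, hN₁, hN₁c, hN₁A⟩ := exists_mem_nhds_isClosed_subset (hAc.isOpen_compl.mem_nhds hx₁)
  obtain ⟨N₂, hN₂, hN₂c, hN₂A⟩ := exists_mem_nhds_isClosed_subset (hAc.isOpen_compl.mem_nhds hx₂)
  obtain ⟨V, hVo, hAV, hVN, hVc⟩ :=
    h (N₁ ∪ N₂)ᶜ (hN₁c.union hN₂c).isOpen_compl
      (subset_compl_comm.1 (union_subset hN₁A hN₂A))
  have hNV : N₁ ∪ N₂ ⊆ Vᶜ := subset_compl_comm.1 hVN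
  have hN₁V : N₁ ⊆ Vᶜ := subset_union_left.trans hNV
  have hN₂V : N₂ ⊆ Vᶜ := subset_union_right.trans hNV
  refine ⟨Vᶜ, ⟨hVo.isClosed_compl.isCompact, ⟨x₁, hN₁V (mem_of_mem_nhds hN₁)⟩, hVc⟩,
    compl_subset_compl.2 hAV, ?_, ?_⟩
  · exact mem_interior_iff_mem_nhds.2 (Filter.mem_of_superset hN₁ hN₁V)
  · exact mem_interior_iff_mem_nhds.2 (Filter.mem_of_superset hN₂ hN₂V)

theorem ComplStronglyCWConnected.exists_isClosed_isPreconnected_superset [T2Space X]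
    (h : ComplStronglyCWConnected A) {C : Set X} (hC : IsCompact C) (hCA : C ⊆ Aᶜ) :
    ∃ K : Set X, IsClosed K ∧ IsPreconnected K ∧ C ⊆ K ∧ K ⊆ Aᶜ := by
  rcases C.eq_empty_or_nonempty with rfl | ⟨x₀, hx₀⟩
  · exact ⟨∅, isClosed_empty, isPreconnected_empty, subset_rfl, empty_subset _⟩
  choose W hW hWA hWx hW₀ using fun x : C => h x (hCA x.2) x₀ (hCA hx₀)
  obtain ⟨t, ht⟩ := hC.elim_finite_subcover (fun x => interior (W x))
    (fun _ => isOpen_interior) (fun x hx => mem_iUnion.2 ⟨⟨x, hx⟩, hWx ⟨x, hx⟩⟩)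
  refine ⟨⋃ i ∈ t, W i, (t.isCompact_biUnion fun i _ => (hW i).1).isClosed, ?_,
    ht.trans (iUnion₂_mono fun i _ => interior_subset), iUnion₂_subset fun i _ => hWA i⟩
  rw [← Finset.set_biUnion_coe, ← sUnion_image]
  refine isPreconnected_sUnion x₀ _ ?_ ?_
  · rintro _ ⟨i, -, rfl⟩
    exact interior_subset (hW₀ i)
  · rintro _ ⟨i, -, rfl⟩
    exact (hW i).2.2

theorem ComplStronglyCWConnected.isColocallyConnected [T2Space X] [CompactSpace X]
    (h : ComplStronglyCWConnected A) : IsColocallyConnected A := by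
  intro U hUo hAU
  obtain ⟨K, hKc, hK, hUK, hKA⟩ := h.exists_isClosed_isPreconnected_superset
    hUo.isClosed_compl.isCompact (compl_subset_compl.2 hAU)
  exact ⟨Kᶜ, hKc.isOpen_compl, subset_compl_comm.1 hKA, compl_subset_comm.1 hUK,
    by rwa [compl_compl]⟩

end

theorem stmt0_general {X : Type*} [MetricSpace X] [CompactSpace X]
    (A : Set X) (hA : IsSubcontinuum A) :
    IsColocallyConnected A ↔ ComplStronglyCWConnected A :=
  ⟨fun h => h.complStronglyCWConnected hA.1.isClosed, fun h => h.isColocallyConnected⟩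

/-- Let `X` be a continuum and `A` a subcontinuum of `X`. Then `A` is a subcontinuum of
colocal connectedness of `X` iff `X \ A` is strongly continuumwise connected. -/
theorem stmt0 {X : Type*} [MetricSpace X] [CompactSpace X] [ConnectedSpace X]
    (A : Set X) (hA : IsSubcontinuum A) :
    IsColocallyConnected A ↔ ComplStronglyCWConnected A :=
  stmt0_general A hA
end

section
/- Let X and Y be continua and let f : X → Y be a surjective continuous map that is monotone and open. If B is a nonblock subcontinuum of Y, then f⁻¹(B) is a nonblock subcontinuum of X. -/
open Set Metric

/-- `A` is a nonblock subcontinuum: a subcontinuum with empty interior such that there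
is an increasing sequence of subcontinua contained in `Aᶜ` whose union is dense
in `Aᶜ`. -/
def IsNonblockSubcontinuum {Z : Type*} [TopologicalSpace Z] (A : Set Z) : Prop :=
  IsSubcontinuum A ∧ interior A = ∅ ∧
    ∃ L : ℕ → Set Z, (∀ n, IsSubcontinuum (L n)) ∧ (∀ n, L n ⊆ Aᶜ) ∧
      (∀ n, L n ⊆ L (n + 1)) ∧ Aᶜ ⊆ closure (⋃ n, L n)

/-- Let `X` and `Y` be continua and `f : X → Y` a continuous surjective monotone open
map. If `B` is a nonblock subcontinuum of `Y`, then `f ⁻¹' B` is a nonblock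
subcontinuum of `X`. -/
theorem stmt2 {X Y : Type*} [MetricSpace X] [CompactSpace X] [ConnectedSpace X]
    [MetricSpace Y] [CompactSpace Y] [ConnectedSpace Y]
    (f : X → Y) (hf : Continuous f) (hsurj : Function.Surjective f)
    (hmono : ∀ B : Set Y, IsConnected B → IsConnected (f ⁻¹' B))
    (hopen : IsOpenMap f)
    (B : Set Y) (hB : IsNonblockSubcontinuum B) :
    IsNonblockSubcontinuum (f ⁻¹' B) := by
  obtain ⟨⟨hBc, hBconn⟩, hBint, L, hLsub, hLcompl, hLmono, hLdense⟩ := hB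
  refine ⟨⟨(hBc.isClosed.preimage hf).isCompact, hmono B hBconn⟩, ?_, fun n => f ⁻¹' L n,
    fun n => ⟨((hLsub n).1.isClosed.preimage hf).isCompact, hmono _ (hLsub n).2⟩,
    fun n x hx hx' => hLcompl n hx hx', fun n x hx => hLmono n hx, ?_⟩
  · by_contra h
    obtain ⟨x, hx⟩ := nonempty_iff_ne_empty.2 h
    have : f x ∈ interior B := by
      have hsub : f '' interior (f ⁻¹' B) ⊆ B := by
        rintro y ⟨z, hz, rfl⟩
        exact interior_subset (s := f ⁻¹' B) hz
      exact interior_maximal hsub (hopen _ isOpen_interior) ⟨x, hx, rfl⟩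
    rw [hBint] at this
    exact this
  · intro x hx
    have h1 : f x ∈ closure (⋃ n, L n) := hLdense hx
    have h2 : x ∈ f ⁻¹' closure (⋃ n, L n) := h1
    have := hopen.preimage_closure_subset_closure_preimage h2
    rwa [preimage_iUnion] at this
end

section
/- If X is a decomposable continuum, then there exists a subcontinuum L of X × X such that L ∩ Δ_X = ∅ and L has nonempty interior in X × X, where Δ_X = {(x,x) : x ∈ X} is the diagonal. -/
open Set Metric

/-- A continuum (as a space) is decomposable if it is the union of two proper
subcontinua. -/
def IsDecomposableContinuum (X : Type*) [TopologicalSpace X] : Prop :=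
  ∃ A B : Set X, IsSubcontinuum A ∧ IsSubcontinuum B ∧
    A ≠ Set.univ ∧ B ≠ Set.univ ∧ A ∪ B = Set.univ

/-- If `X` is a decomposable continuum, then there is a subcontinuum `L` of `X × X`,
disjoint from the diagonal, having nonempty interior in `X × X`. -/
theorem stmt4 {X : Type*} [MetricSpace X] [CompactSpace X] [ConnectedSpace X]
    (hX : IsDecomposableContinuum X) :
    ∃ L : Set (X × X), IsSubcontinuum L ∧ L ∩ {p : X × X | p.1 = p.2} = ∅ ∧
      (interior L).Nonempty := by
  obtain ⟨A, B, ⟨hAc, hAconn⟩, ⟨hBc, hBconn⟩, hAne, hBne, hAB⟩ := hX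
  -- pick a ∉ B, b ∉ A
  obtain ⟨a, ha⟩ : ∃ a, a ∉ B := by
    by_contra h; push_neg at h; exact hBne (eq_univ_of_forall h)
  obtain ⟨b, hb⟩ : ∃ b, b ∉ A := by
    by_contra h; push_neg at h; exact hAne (eq_univ_of_forall h)
  have hbB : b ∈ B := by
    have h : b ∈ A ∪ B := hAB ▸ mem_univ b
    exact h.resolve_left hb
  have hBcl : IsClosed B := hBc.isClosed
  have hAcl : IsClosed A := hAc.isClosed
  have hcomplA : Bᶜ ⊆ A := by
    intro x hx
    have h : x ∈ A ∪ B := hAB ▸ mem_univ x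
    exact h.resolve_right hx
  have hcomplB : Aᶜ ⊆ B := by
    intro x hx
    have h : x ∈ A ∪ B := hAB ▸ mem_univ x
    exact h.resolve_left hx
  -- a small closed ball around a avoiding B
  obtain ⟨ε, hε, hball⟩ := Metric.isOpen_iff.1 hBcl.isOpen_compl a ha
  set r := ε / 2 with hr
  have hrpos : 0 < r := by positivity
  have hCB : closedBall a r ⊆ Bᶜ := fun x hx =>
    hball (lt_of_le_of_lt (mem_closedBall.1 hx) (by linarith))
  have hCA : closedBall a r ⊆ A := fun x hx => hcomplA (hCB hx)
  set L : Set (X × X) := (A ×ˢ {b}) ∪ (closedBall a r ×ˢ B) with hL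
  refine ⟨L, ⟨?_, ?_⟩, ?_, ?_⟩
  · exact (hAc.prod isCompact_singleton).union
      ((isCompact_closedBall a r).prod hBc)
  · constructor
    · exact ⟨(a, b), Or.inl ⟨hcomplA ha, rfl⟩⟩
    · apply isPreconnected_of_forall ((a : X), (b : X))
      rintro ⟨x, y⟩ (⟨hx, hy⟩ | ⟨hx, hy⟩)
      · exact ⟨A ×ˢ {b}, subset_union_left, ⟨hcomplA ha, rfl⟩, ⟨hx, hy⟩,
          hAconn.2.prod isPreconnected_singleton⟩
      · refine ⟨(A ×ˢ {b}) ∪ ({x} ×ˢ B), ?_, Or.inl ⟨hcomplA ha, rfl⟩,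
          Or.inr ⟨rfl, hy⟩, ?_⟩
        · apply union_subset subset_union_left
          refine subset_trans ?_ subset_union_right
          exact prod_mono (singleton_subset_iff.2 hx) subset_rfl
        · apply IsPreconnected.union (x, b)
          · exact ⟨hCA hx, rfl⟩
          · exact ⟨rfl, hbB⟩
          · exact hAconn.2.prod isPreconnected_singleton
          · exact isPreconnected_singleton.prod hBconn.2
  · ext ⟨x, y⟩
    simp only [mem_inter_iff, mem_empty_iff_false, iff_false, not_and, mem_setOf_eq]
    rintro (⟨hx, hy⟩ | ⟨hx, hy⟩) heq
    · exact hb (by subst heq; exact hy ▸ hx)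
    · exact hCB hx (heq ▸ hy)
  · refine ⟨(a, b), ?_⟩
    apply mem_interior.2
    refine ⟨ball a r ×ˢ Aᶜ, ?_, (isOpen_ball).prod hAcl.isOpen_compl, ⟨mem_ball_self hrpos, hb⟩⟩
    refine subset_trans (prod_mono ball_subset_closedBall hcomplB) subset_union_right
end

section
/- Let X be a nondegenerate chainable continuum of type λ. Then the diagonal Δ_X is a strong centre in X²: there exist nonempty open subsets U and V of X² such that every subcontinuum L of X² with L ∩ U ≠ ∅ and L ∩ V ≠ ∅ satisfies L ∩ Δ_X ≠ ∅. -/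
open Set Metric

/-- `X` is chainable. -/
def IsChainable (X : Type*) [MetricSpace X] : Prop :=
  ∀ ε : ℝ, 0 < ε → ∃ n : ℕ, ∃ U : Fin (n + 1) → Set X,
    (∀ j, IsOpen (U j)) ∧ (⋃ j, U j) = Set.univ ∧
    (∀ j, Metric.diam (U j) < ε) ∧
    ∀ j k, (U j ∩ U k).Nonempty ↔ |((j : ℕ) : ℤ) - ((k : ℕ) : ℤ)| ≤ 1

/-- `X` is an irreducible continuum: there are points `p, q` such that no proper
subcontinuum contains both. -/
def IsIrreducibleContinuum (X : Type*) [TopologicalSpace X] : Prop :=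
  ∃ p q : X, ∀ S : Set X, IsSubcontinuum S → p ∈ S → q ∈ S → S = Set.univ

/-- A subset `S` is a decomposable subcontinuum-style set: it is the union of two
subcontinua, each a proper subset of `S`. -/
def IsDecomposableSet {X : Type*} [TopologicalSpace X] (S : Set X) : Prop :=
  ∃ A B : Set X, IsSubcontinuum A ∧ IsSubcontinuum B ∧ A ≠ S ∧ B ≠ S ∧ A ∪ B = S

/-- `X` is of type `λ`: irreducible, and every indecomposable subcontinuum has empty
interior. -/
def IsTypeLambda (X : Type*) [TopologicalSpace X] : Prop :=
  IsIrreducibleContinuum X ∧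
    ∀ S : Set X, IsSubcontinuum S → ¬ IsDecomposableSet S → interior S = ∅

/-- Let `X` be a nondegenerate chainable continuum of type `λ`. Then the diagonal is a
strong centre in `X²`: there exist nonempty open `U`, `V` in `X²` such that every
subcontinuum of `X²` meeting both `U` and `V` meets the diagonal. -/
theorem stmt6 {X : Type*} [MetricSpace X] [CompactSpace X] [ConnectedSpace X]
    (hnd : ∃ x y : X, x ≠ y) (hch : IsChainable X) (hlam : IsTypeLambda X) :
    ∃ U V : Set (X × X), IsOpen U ∧ U.Nonempty ∧ IsOpen V ∧ V.Nonempty ∧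
      ∀ L : Set (X × X), IsSubcontinuum L → (L ∩ U).Nonempty → (L ∩ V).Nonempty →
        (L ∩ {p : X × X | p.1 = p.2}).Nonempty := by
  classical
  obtain ⟨x₀, y₀, -⟩ := hnd
  obtain ⟨-, hemp⟩ := hlam
  have hXdec : IsDecomposableSet (univ : Set X) := by
    by_contra h
    have h2 := hemp univ ⟨isCompact_univ, isConnected_univ⟩ h
    rw [interior_univ] at h2
    exact (h2 ▸ mem_univ x₀ : x₀ ∈ (∅ : Set X))
  obtain ⟨A, B, hA, hB, hAne, hBne, hAB⟩ := hXdec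
  have hAn : A.Nonempty := hA.2.1
  have hBn : B.Nonempty := hB.2.1
  obtain ⟨p', hp'⟩ : ∃ p', p' ∉ B := by
    by_contra h; push_neg at h
    exact hBne (eq_univ_iff_forall.mpr h)
  obtain ⟨q', hq'⟩ : ∃ q', q' ∉ A := by
    by_contra h; push_neg at h
    exact hAne (eq_univ_iff_forall.mpr h)
  have hpB : 0 < infDist p' B := (hB.1.isClosed.notMem_iff_infDist_pos hBn).mp hp'
  have hqA : 0 < infDist q' A := (hA.1.isClosed.notMem_iff_infDist_pos hAn).mp hq'
  set rp : ℝ := infDist p' B / 2 with hrpdef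
  set rq : ℝ := infDist q' A / 2 with hrqdef
  have hrp : 0 < rp := by positivity
  have hrq : 0 < rq := by positivity
  refine ⟨(ball p' rp) ×ˢ (ball q' rq), (ball q' rq) ×ˢ (ball p' rp),
    isOpen_ball.prod isOpen_ball, ⟨(p', q'), mem_ball_self hrp, mem_ball_self hrq⟩,
    isOpen_ball.prod isOpen_ball, ⟨(q', p'), mem_ball_self hrq, mem_ball_self hrp⟩, ?_⟩
  intro L hL hLU hLV
  by_contra hΔ
  rw [Set.not_nonempty_iff_eq_empty] at hΔ
  have hneq : ∀ z ∈ L, z.1 ≠ z.2 := by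
    intro z hz he
    exact (hΔ ▸ (⟨hz, he⟩ : z ∈ L ∩ {p : X × X | p.1 = p.2}) : z ∈ (∅ : Set (X × X)))
  obtain ⟨ab, habL, habU⟩ := hLU
  obtain ⟨cd, hcdL, hcdV⟩ := hLV
  have hLne : L.Nonempty := ⟨ab, habL⟩
  have hcont : Continuous fun z : X × X => dist z.1 z.2 := continuous_fst.dist continuous_snd
  obtain ⟨z₀, hz₀L, hz₀m⟩ := hL.1.exists_isMinOn hLne hcont.continuousOn
  set δ : ℝ := dist z₀.1 z₀.2 with hδdef
  have hδpos : 0 < δ := dist_pos.mpr (hneq z₀ hz₀L)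
  have hδle : ∀ z ∈ L, δ ≤ dist z.1 z.2 := fun z hz => hz₀m hz
  set ε : ℝ := min (δ / 2) (min rp rq) with hεdef
  have hεpos : 0 < ε := lt_min (by positivity) (lt_min hrp hrq)
  have hεδ : ε ≤ δ / 2 := min_le_left _ _
  have hεrp : ε ≤ rp := le_trans (min_le_right _ _) (min_le_left _ _)
  have hεrq : ε ≤ rq := le_trans (min_le_right _ _) (min_le_right _ _)
  obtain ⟨n, C, hCo, hCu, hCd, hCiff⟩ := hch ε hεpos
  have hbdd : ∀ j, Bornology.IsBounded (C j) := fun j => isCompact_univ.isBounded.subset (subset_univ _)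
  have hmem : ∀ x : X, ∃ j, x ∈ C j := by
    intro x
    exact mem_iUnion.mp (hCu ▸ mem_univ x)
  -- points of L have chain indices at distance ≥ 2
  have hgap : ∀ z ∈ L, ∀ j k : Fin (n + 1), z.1 ∈ C j → z.2 ∈ C k →
      ¬ (|((j : ℕ) : ℤ) - ((k : ℕ) : ℤ)| ≤ 1) := by
    intro z hz j k hj hk hle
    obtain ⟨w, hwj, hwk⟩ := (hCiff j k).mpr hle
    have h1 : dist z.1 w ≤ diam (C j) := dist_le_diam_of_mem (hbdd j) hj hwj
    have h2 : dist w z.2 ≤ diam (C k) := dist_le_diam_of_mem (hbdd k) hwk hk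
    have h3 : dist z.1 z.2 ≤ dist z.1 w + dist w z.2 := dist_triangle _ _ _
    have h4 := hδle z hz
    have h5 := hCd j
    have h6 := hCd k
    linarith
  -- links meeting points near p' miss B and meet A
  have hlinkP : ∀ x ∈ ball p' rp, ∀ j : Fin (n + 1), x ∈ C j →
      (C j ∩ A).Nonempty ∧ C j ∩ B = ∅ := by
    intro x hx j hj
    have hxB : C j ∩ B = ∅ := by
      rw [eq_empty_iff_forall_notMem]
      rintro z ⟨hzj, hzB⟩
      have h1 : dist x z ≤ diam (C j) := dist_le_diam_of_mem (hbdd j) hj hzj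
      have h2 : infDist p' B ≤ dist p' z := infDist_le_dist_of_mem hzB
      have h3 : dist p' z ≤ dist p' x + dist x z := dist_triangle _ _ _
      have h4 : dist p' x < rp := by rw [dist_comm]; exact mem_ball.mp hx
      have h5 := hCd j
      rw [hrpdef] at *
      linarith
    refine ⟨⟨x, hj, ?_⟩, hxB⟩
    have hxu : x ∈ A ∪ B := hAB ▸ mem_univ x
    rcases hxu with h | h
    · exact h
    · exact absurd (hxB ▸ (⟨hj, h⟩ : x ∈ C j ∩ B)) (notMem_empty x)
  have hlinkQ : ∀ x ∈ ball q' rq, ∀ j : Fin (n + 1), x ∈ C j →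
      (C j ∩ B).Nonempty ∧ C j ∩ A = ∅ := by
    intro x hx j hj
    have hxA : C j ∩ A = ∅ := by
      rw [eq_empty_iff_forall_notMem]
      rintro z ⟨hzj, hzA⟩
      have h1 : dist x z ≤ diam (C j) := dist_le_diam_of_mem (hbdd j) hj hzj
      have h2 : infDist q' A ≤ dist q' z := infDist_le_dist_of_mem hzA
      have h3 : dist q' z ≤ dist q' x + dist x z := dist_triangle _ _ _
      have h4 : dist q' x < rq := by rw [dist_comm]; exact mem_ball.mp hx
      have h5 := hCd j
      rw [hrqdef] at *
      linarith
    refine ⟨⟨x, hj, ?_⟩, hxA⟩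
    have hxu : x ∈ A ∪ B := hAB ▸ mem_univ x
    rcases hxu with h | h
    · exact absurd (hxA ▸ (⟨hj, h⟩ : x ∈ C j ∩ A)) (notMem_empty x)
    · exact h
  -- interval property: links meeting a preconnected set form an interval
  have hint : ∀ S : Set X, IsPreconnected S → ∀ j1 l j3 : Fin (n + 1),
      ((j1 : ℕ) : ℤ) ≤ ((l : ℕ) : ℤ) → ((l : ℕ) : ℤ) ≤ ((j3 : ℕ) : ℤ) →
      (C j1 ∩ S).Nonempty → (C j3 ∩ S).Nonempty → (C l ∩ S).Nonempty := by
    intro S hS j1 l j3 h1l hl3 hj1 hj3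
    by_contra hl
    rw [Set.not_nonempty_iff_eq_empty] at hl
    set S1 : Set X := ⋃ j ∈ {j : Fin (n + 1) | (j : ℕ) < (l : ℕ)}, C j with hS1def
    set S2 : Set X := ⋃ j ∈ {j : Fin (n + 1) | (l : ℕ) < (j : ℕ)}, C j with hS2def
    have hS1o : IsOpen S1 := isOpen_biUnion fun j _ => hCo j
    have hS2o : IsOpen S2 := isOpen_biUnion fun j _ => hCo j
    have hcov : S ⊆ S1 ∪ S2 := by
      intro x hx
      obtain ⟨j, hj⟩ := hmem x
      have hjl : j ≠ l := by
        rintro rfl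
        exact (hl ▸ (⟨hj, hx⟩ : x ∈ C j ∩ S) : x ∈ (∅ : Set X))
      have hjl' : (j : ℕ) ≠ (l : ℕ) := fun h => hjl (Fin.ext h)
      rcases lt_or_gt_of_ne hjl' with h | h
      · exact Or.inl (mem_biUnion h hj)
      · exact Or.inr (mem_biUnion h hj)
    have h1n : (S ∩ S1).Nonempty := by
      obtain ⟨x, hxj, hxS⟩ := hj1
      have hlt : (j1 : ℕ) < (l : ℕ) := by
        rcases lt_or_eq_of_le (by exact_mod_cast h1l : (j1 : ℕ) ≤ (l : ℕ)) with h | h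
        · exact h
        · exact absurd (hl ▸ (⟨(Fin.ext h : j1 = l) ▸ hxj, hxS⟩ : x ∈ C l ∩ S))
            (notMem_empty x)
      exact ⟨x, hxS, mem_biUnion hlt hxj⟩
    have h2n : (S ∩ S2).Nonempty := by
      obtain ⟨x, hxj, hxS⟩ := hj3
      have hlt : (l : ℕ) < (j3 : ℕ) := by
        rcases lt_or_eq_of_le (by exact_mod_cast hl3 : (l : ℕ) ≤ (j3 : ℕ)) with h | h
        · exact h
        · exact absurd (hl ▸ (⟨(Fin.ext h.symm : j3 = l) ▸ hxj, hxS⟩ : x ∈ C l ∩ S))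
            (notMem_empty x)
      exact ⟨x, hxS, mem_biUnion hlt hxj⟩
    obtain ⟨x, -, hx1, hx2⟩ := hS S1 S2 hS1o hS2o hcov h1n h2n
    simp only [hS1def, hS2def, mem_iUnion, mem_setOf_eq] at hx1 hx2
    obtain ⟨j, hjl, hxj⟩ := hx1
    obtain ⟨k, hlk, hxk⟩ := hx2
    have hnon : (C j ∩ C k).Nonempty := ⟨x, hxj, hxk⟩
    have habs := (hCiff j k).mp hnon
    rw [abs_le] at habs
    omega
  -- the two "sides" of the diagonal at chain scale
  set W1 : Set (X × X) :=
    {z : X × X | ∃ j k : Fin (n + 1), ((j : ℕ) : ℤ) + 2 ≤ ((k : ℕ) : ℤ) ∧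
      z.1 ∈ C j ∧ z.2 ∈ C k} with hW1def
  set W2 : Set (X × X) :=
    {z : X × X | ∃ j k : Fin (n + 1), ((k : ℕ) : ℤ) + 2 ≤ ((j : ℕ) : ℤ) ∧
      z.1 ∈ C j ∧ z.2 ∈ C k} with hW2def
  have hW1o : IsOpen W1 := by
    have he : W1 = ⋃ j : Fin (n + 1), ⋃ k : Fin (n + 1), ⋃ (_ : ((j : ℕ) : ℤ) + 2 ≤ ((k : ℕ) : ℤ)), C j ×ˢ C k := by
      ext z
      constructor
      · rintro ⟨j, k, h, h1, h2⟩
        exact mem_iUnion.mpr ⟨j, mem_iUnion.mpr ⟨k, mem_iUnion.mpr ⟨h, ⟨h1, h2⟩⟩⟩⟩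
      · intro hz
        obtain ⟨j, hz⟩ := mem_iUnion.mp hz
        obtain ⟨k, hz⟩ := mem_iUnion.mp hz
        obtain ⟨h, hz⟩ := mem_iUnion.mp hz
        exact ⟨j, k, h, hz.1, hz.2⟩
    rw [he]
    exact isOpen_iUnion fun j => isOpen_iUnion fun k => isOpen_iUnion fun _ =>
      (hCo j).prod (hCo k)
  have hW2o : IsOpen W2 := by
    have he : W2 = ⋃ j : Fin (n + 1), ⋃ k : Fin (n + 1), ⋃ (_ : ((k : ℕ) : ℤ) + 2 ≤ ((j : ℕ) : ℤ)), C j ×ˢ C k := by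
      ext z
      constructor
      · rintro ⟨j, k, h, h1, h2⟩
        exact mem_iUnion.mpr ⟨j, mem_iUnion.mpr ⟨k, mem_iUnion.mpr ⟨h, ⟨h1, h2⟩⟩⟩⟩
      · intro hz
        obtain ⟨j, hz⟩ := mem_iUnion.mp hz
        obtain ⟨k, hz⟩ := mem_iUnion.mp hz
        obtain ⟨h, hz⟩ := mem_iUnion.mp hz
        exact ⟨j, k, h, hz.1, hz.2⟩
    rw [he]
    exact isOpen_iUnion fun j => isOpen_iUnion fun k => isOpen_iUnion fun _ =>
      (hCo j).prod (hCo k)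
  have hWd : W1 ∩ W2 = ∅ := by
    rw [eq_empty_iff_forall_notMem]
    rintro z ⟨⟨j, k, hjk, hz1, hz2⟩, ⟨j', k', hjk', hz1', hz2'⟩⟩
    have hj2 := (hCiff j j').mp ⟨z.1, hz1, hz1'⟩
    have hk2 := (hCiff k k').mp ⟨z.2, hz2, hz2'⟩
    rw [abs_le] at hj2 hk2
    omega
  have hcov : L ⊆ W1 ∪ W2 := by
    intro z hz
    obtain ⟨j, hj⟩ := hmem z.1
    obtain ⟨k, hk⟩ := hmem z.2
    have hg := hgap z hz j k hj hk
    rw [abs_le] at hg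
    have : ((j : ℕ) : ℤ) + 2 ≤ ((k : ℕ) : ℤ) ∨ ((k : ℕ) : ℤ) + 2 ≤ ((j : ℕ) : ℤ) := by omega
    rcases this with h | h
    · exact Or.inl ⟨j, k, h, hj, hk⟩
    · exact Or.inr ⟨j, k, h, hj, hk⟩
  have hdi : L ⊆ W1 ∨ L ⊆ W2 := by
    rcases (L ∩ W1).eq_empty_or_nonempty with h1 | h1
    · right
      intro z hz
      rcases hcov hz with h | h
      · exact absurd (h1 ▸ (⟨hz, h⟩ : z ∈ L ∩ W1)) (notMem_empty z)
      · exact h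
    rcases (L ∩ W2).eq_empty_or_nonempty with h2 | h2
    · left
      intro z hz
      rcases hcov hz with h | h
      · exact h
      · exact absurd (h2 ▸ (⟨hz, h⟩ : z ∈ L ∩ W2)) (notMem_empty z)
    · obtain ⟨z, -, hz12⟩ := hL.2.2 W1 W2 hW1o hW2o hcov h1 h2
      exact absurd (hWd ▸ (⟨hz12.1, hz12.2⟩ : z ∈ W1 ∩ W2)) (notMem_empty z)
  obtain ⟨hab1, hab2⟩ := habU
  obtain ⟨hcd1, hcd2⟩ := hcdV
  rcases hdi with hsub | hsub
  · -- L ⊆ W1 : first coordinate index + 2 ≤ second coordinate index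
    obtain ⟨j, k, hjk, hj, hk⟩ := hsub habL
    obtain ⟨j', k', hjk', hj', hk'⟩ := hsub hcdL
    obtain ⟨hPAj, hPBj⟩ := hlinkP ab.1 hab1 j hj
    obtain ⟨hPBk, hPAk⟩ := hlinkQ ab.2 hab2 k hk
    obtain ⟨hPBj', hPAj'⟩ := hlinkQ cd.1 hcd1 j' hj'
    obtain ⟨hPAk', hPBk'⟩ := hlinkP cd.2 hcd2 k' hk'
    rcases le_total ((j' : ℕ) : ℤ) ((j : ℕ) : ℤ) with h | h
    · have := hint B hB.2.2 j' j k h (by omega) hPBj' hPBk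
      rw [hPBj] at this
      exact absurd this (by simp)
    · have := hint A hA.2.2 j j' k' h (by omega) hPAj hPAk'
      rw [hPAj'] at this
      exact absurd this (by simp)
  · -- L ⊆ W2 : second coordinate index + 2 ≤ first coordinate index
    obtain ⟨j, k, hkj, hj, hk⟩ := hsub habL
    obtain ⟨j', k', hkj', hj', hk'⟩ := hsub hcdL
    obtain ⟨hPAj, hPBj⟩ := hlinkP ab.1 hab1 j hj
    obtain ⟨hPBk, hPAk⟩ := hlinkQ ab.2 hab2 k hk
    obtain ⟨hPBj', hPAj'⟩ := hlinkQ cd.1 hcd1 j' hj'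
    obtain ⟨hPAk', hPBk'⟩ := hlinkP cd.2 hcd2 k' hk'
    rcases le_total ((k : ℕ) : ℤ) ((k' : ℕ) : ℤ) with h | h
    · have := hint B hB.2.2 k k' j' h (by omega) hPBk hPBj'
      rw [hPBk'] at this
      exact absurd this (by simp)
    · have := hint A hA.2.2 k' k j h (by omega) hPAk' hPAj
      rw [hPAk] at this
      exact absurd this (by simp)
end

section
/- Let X be a continuum and let K be a nondegenerate terminal subcontinuum of X. If K is chainable, then X² \ Δ_X is not continuumwise connected; that is, there exist points z, w ∈ X² \ Δ_X such that no subcontinuum W of X² satisfies {z, w} ⊆ W ⊆ X² \ Δ_X. -/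
open Set Metric
set_option linter.unusedSectionVars false

/-- `K` is a terminal subcontinuum: every subcontinuum meeting `K` contains it or is
contained in it. -/
def IsTerminalSubcontinuum {X : Type*} [TopologicalSpace X] (K : Set X) : Prop :=
  IsSubcontinuum K ∧
    ∀ L : Set X, IsSubcontinuum L → (K ∩ L).Nonempty → K ⊆ L ∨ L ⊆ K

/-- The minimal index of a chain link containing `x`. -/
private noncomputable def mIdx {X : Type*} (n : ℕ) (V : ℕ → Set X) (x : X) : ℕ :=
  sInf {j | j ≤ n ∧ x ∈ V j}

section ChainFacts

variable {X : Type*} [MetricSpace X] {K : Set X} {δ : ℝ} {n : ℕ} {V : ℕ → Set X}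

private lemma mIdx_spec (hcov : ∀ x ∈ K, ∃ j, j ≤ n ∧ x ∈ V j) {x : X} (hx : x ∈ K) :
    mIdx n V x ≤ n ∧ x ∈ V (mIdx n V x) :=
  Nat.sInf_mem (hcov x hx)

private lemma mIdx_le {j : ℕ} (hj : j ≤ n) {x : X} (hx : x ∈ V j) : mIdx n V x ≤ j :=
  Nat.sInf_le ⟨hj, hx⟩

private lemma mIdx_near
    (hadj : ∀ j, j ≤ n → ∀ k, k ≤ n → ((V j ∩ V k).Nonempty ↔ |(j : ℤ) - (k : ℤ)| ≤ 1))
    (hcov : ∀ x ∈ K, ∃ j, j ≤ n ∧ x ∈ V j)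
    {x : X} (hxK : x ∈ K) {j : ℕ} (hj : j ≤ n) (hx : x ∈ V j) :
    (j : ℤ) - 1 ≤ (mIdx n V x : ℤ) ∧ (mIdx n V x : ℤ) ≤ (j : ℤ) := by
  have hm := mIdx_spec hcov hxK
  have h1 : ((V (mIdx n V x)) ∩ V j).Nonempty := ⟨x, hm.2, hx⟩
  have h2 := (hadj _ hm.1 _ hj).mp h1
  rw [abs_le] at h2
  have h3 : mIdx n V x ≤ j := mIdx_le hj hx
  constructor
  · omega
  · exact_mod_cast h3

private lemma chain_walk (hδ : 0 < δ)
    (hVK : ∀ j, V j ⊆ K)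
    (hcov : ∀ x ∈ K, ∃ j, j ≤ n ∧ x ∈ V j)
    (hsmall : ∀ j, j ≤ n → ∀ x ∈ V j, ∀ y ∈ V j, dist x y < δ)
    (hadj : ∀ j, j ≤ n → ∀ k, k ≤ n → ((V j ∩ V k).Nonempty ↔ |(j : ℤ) - (k : ℤ)| ≤ 1)) :
    ∀ k : ℕ, ∀ x, x ∈ K → ∀ y, y ∈ K → mIdx n V x ≤ mIdx n V y →
      mIdx n V y - mIdx n V x ≤ k → dist x y < ((k : ℝ) + 1) * δ := by
  intro k
  induction k with
  | zero =>
    intro x hx y hy hle hsub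
    have hxy : mIdx n V x = mIdx n V y := by omega
    have hmx := mIdx_spec hcov hx
    have hmy := mIdx_spec hcov hy
    have : dist x y < δ := hsmall _ hmy.1 x (hxy ▸ hmx.2) y hmy.2
    simpa using this
  | succ k ih =>
    intro x hx y hy hle hsub
    by_cases hk : mIdx n V y - mIdx n V x ≤ k
    · have := ih x hx y hy hle hk
      have hlt : ((k : ℝ) + 1) * δ < ((k + 1 : ℕ) : ℝ) * δ + δ := by
        push_cast
        nlinarith
      calc dist x y < ((k : ℝ) + 1) * δ := this
        _ ≤ (((k + 1 : ℕ) : ℝ) + 1) * δ := by push_cast; nlinarith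
    · have heq : mIdx n V y - mIdx n V x = k + 1 := by omega
      have hmy := mIdx_spec hcov hy
      have hmy1 : mIdx n V y - 1 ≤ n := by omega
      have hnonempty : ((V (mIdx n V y - 1)) ∩ V (mIdx n V y)).Nonempty := by
        rw [hadj _ hmy1 _ hmy.1]
        have h1 : 1 ≤ mIdx n V y := by omega
        have : ((mIdx n V y - 1 : ℕ) : ℤ) = (mIdx n V y : ℤ) - 1 := by omega
        rw [this]
        simp
      obtain ⟨t, ht1, ht2⟩ := hnonempty
      have htK : t ∈ K := hVK _ ht1
      have hty : dist t y < δ := hsmall _ hmy.1 t ht2 y hmy.2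
      have hmt_le : mIdx n V t ≤ mIdx n V y - 1 := mIdx_le hmy1 ht1
      have hmt_ge := (mIdx_near hadj hcov htK hmy1 ht1).1
      by_cases hxt : mIdx n V x ≤ mIdx n V t
      · have hsub' : mIdx n V t - mIdx n V x ≤ k := by omega
        have hxt' := ih x hx t htK hxt hsub'
        calc dist x y ≤ dist x t + dist t y := dist_triangle x t y
          _ < ((k : ℝ) + 1) * δ + δ := by linarith
          _ ≤ (((k + 1 : ℕ) : ℝ) + 1) * δ := by push_cast; nlinarith
      · -- mIdx t < mIdx x; forces k = 0 and x, t in the same link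
        have hk0 : k = 0 := by omega
        have hxeq : mIdx n V x = mIdx n V y - 1 := by omega
        have hmx := mIdx_spec hcov hx
        have hxt' : dist x t < δ := by
          have : x ∈ V (mIdx n V y - 1) := hxeq ▸ hmx.2
          exact hsmall _ hmy1 x this t ht1
        calc dist x y ≤ dist x t + dist t y := dist_triangle x t y
          _ < δ + δ := by linarith
          _ ≤ (((k + 1 : ℕ) : ℝ) + 1) * δ := by push_cast; nlinarith

private lemma chain_dist (hδ : 0 < δ)
    (hVK : ∀ j, V j ⊆ K)
    (hcov : ∀ x ∈ K, ∃ j, j ≤ n ∧ x ∈ V j)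
    (hsmall : ∀ j, j ≤ n → ∀ x ∈ V j, ∀ y ∈ V j, dist x y < δ)
    (hadj : ∀ j, j ≤ n → ∀ k, k ≤ n → ((V j ∩ V k).Nonempty ↔ |(j : ℤ) - (k : ℤ)| ≤ 1)) :
    ∀ c : ℕ, ∀ x, x ∈ K → ∀ y, y ∈ K → |(mIdx n V x : ℤ) - (mIdx n V y : ℤ)| ≤ (c : ℤ) →
      dist x y < ((c : ℝ) + 1) * δ := by
  intro c x hx y hy habs
  rw [abs_le] at habs
  rcases le_total (mIdx n V x) (mIdx n V y) with h | h
  · exact chain_walk hδ hVK hcov hsmall hadj c x hx y hy h (by omega)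
  · rw [dist_comm]
    exact chain_walk hδ hVK hcov hsmall hadj c y hy x hx h (by omega)

end ChainFacts

private lemma exists_isClopen_avoiding {α : Type*} [TopologicalSpace α] [T2Space α]
    [CompactSpace α] (x : α) (D : Set α) (hD : IsClosed D)
    (h : connectedComponent x ∩ D = ∅) :
    ∃ V : Set α, IsClopen V ∧ x ∈ V ∧ V ∩ D = ∅ := by
  have hDc : IsCompact D := hD.isCompact
  have hcover : D ⊆ ⋃ Z : {Z : Set α // IsClopen Z ∧ x ∈ Z}, (↑Z : Set α)ᶜ := by
    intro d hd
    rw [mem_iUnion]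
    by_contra hc
    push_neg at hc
    have hdmem : d ∈ connectedComponent x := by
      rw [connectedComponent_eq_iInter_isClopen]
      refine mem_iInter.mpr fun Z => ?_
      have := hc Z
      simpa using this
    have : d ∈ connectedComponent x ∩ D := ⟨hdmem, hd⟩
    rw [h] at this
    exact this
  obtain ⟨t, ht⟩ := hDc.elim_finite_subcover _ (fun Z => Z.2.1.compl.isOpen) hcover
  refine ⟨⋂ Z ∈ t, (Z : {Z : Set α // IsClopen Z ∧ x ∈ Z}).1, ?_, ?_, ?_⟩
  · exact isClopen_biInter_finset fun Z _ => Z.2.1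
  · exact mem_iInter₂.mpr fun Z _ => Z.2.2
  · rw [eq_empty_iff_forall_notMem]
    rintro d ⟨hd1, hd2⟩
    obtain ⟨Z, hZt, hdZ⟩ := mem_iUnion₂.mp (ht hd2)
    exact hdZ (mem_iInter₂.mp hd1 Z hZt)

private lemma core {X : Type*} [MetricSpace X] {K : Set X}
    (hKcomp : IsCompact K) (hKne : K.Nonempty)
    (hterm : ∀ L : Set X, IsCompact L ∧ IsConnected L → (K ∩ L).Nonempty → K ⊆ L ∨ L ⊆ K)
    (hch : ∀ ε : ℝ, 0 < ε → ∃ n : ℕ, ∃ V O : ℕ → Set X,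
        (∀ j, IsOpen (O j)) ∧ (∀ j, V j = K ∩ O j) ∧
        (∀ x ∈ K, ∃ j, j ≤ n ∧ x ∈ V j) ∧
        (∀ j, j ≤ n → ∀ x ∈ V j, ∀ y ∈ V j, dist x y < ε) ∧
        (∀ j, j ≤ n → ∀ k, k ≤ n → ((V j ∩ V k).Nonempty ↔ |(j : ℤ) - (k : ℤ)| ≤ 1)))
    {a b : X} (ha : a ∈ K) (hb : b ∈ K)
    {W : Set (X × X)} (hWcomp : IsCompact W) (hWconn : IsConnected W)
    (hWdiag : ∀ z ∈ W, z.1 ≠ z.2)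
    (hzW : (a, b) ∈ W) (hwW : (b, a) ∈ W) : False := by
  classical
  -- the minimal separation of coordinates on W
  obtain ⟨z₀, hz₀W, hz₀⟩ := hWcomp.exists_isMinOn ⟨(a, b), hzW⟩
      ((continuous_fst.dist continuous_snd).continuousOn)
  set ε₀ : ℝ := dist z₀.1 z₀.2 with hε₀def
  have hε₀pos : 0 < ε₀ := dist_pos.mpr (hWdiag z₀ hz₀W)
  have hmin : ∀ z ∈ W, ε₀ ≤ dist z.1 z.2 := fun z hz => hz₀ hz
  set δ : ℝ := ε₀ / 40 with hδdef
  have hδpos : 0 < δ := by positivity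
  have hε40 : ε₀ = 40 * δ := by rw [hδdef]; ring
  obtain ⟨n, V, O, hO, hVO, hcov, hsmall, hadj⟩ := hch δ hδpos
  have hVK : ∀ j, V j ⊆ K := fun j => by rw [hVO j]; exact inter_subset_left
  -- Lebesgue number for the chain cover
  have hKopencov : K ⊆ ⋃ j : ℕ, (if j ≤ n then O j else ∅) := by
    intro x hx
    obtain ⟨j, hj, hxj⟩ := hcov x hx
    refine mem_iUnion.mpr ⟨j, ?_⟩
    rw [if_pos hj]
    rw [hVO j] at hxj
    exact hxj.2
  obtain ⟨lam, hlampos, hleb⟩ := lebesgue_number_lemma_of_metric hKcomp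
      (fun j : ℕ => by by_cases h : j ≤ n <;> simp [h, hO] ) hKopencov
  have hcommon : ∀ x ∈ K, ∀ y ∈ K, dist x y < lam →
      ∃ j, j ≤ n ∧ x ∈ V j ∧ y ∈ V j := by
    intro x hx y hy hxy
    obtain ⟨j, hball⟩ := hleb x hx
    by_cases hj : j ≤ n
    · rw [if_pos hj] at hball
      refine ⟨j, hj, ?_, ?_⟩
      · rw [hVO j]; exact ⟨hx, hball (mem_ball_self hlampos)⟩
      · rw [hVO j]
        refine ⟨hy, hball ?_⟩
        rw [mem_ball, dist_comm]
        exact hxy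
    · rw [if_neg hj] at hball
      exact absurd (hball (mem_ball_self hlampos)) (notMem_empty x)
  have hF1 : ∀ x ∈ K, ∀ y ∈ K, dist x y < lam →
      |(mIdx n V x : ℤ) - (mIdx n V y : ℤ)| ≤ 1 := by
    intro x hx y hy hxy
    obtain ⟨j, hj, hxj, hyj⟩ := hcommon x hx y hy hxy
    have h1 := mIdx_near hadj hcov hx hj hxj
    have h2 := mIdx_near hadj hcov hy hj hyj
    rw [abs_le]
    omega
  have hdist := chain_dist hδpos hVK hcov hsmall hadj
  -- extremal points of the index function on K
  have hSfin : {j | ∃ x ∈ K, mIdx n V x = j}.Finite := by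
    apply (Set.finite_Iic n).subset
    rintro j ⟨x, hx, rfl⟩
    exact (mIdx_spec hcov hx).1
  have hSne : {j | ∃ x ∈ K, mIdx n V x = j}.Nonempty := ⟨_, a, ha, rfl⟩
  obtain ⟨xmin, hxminK, hxminval⟩ := Nat.sInf_mem hSne
  obtain ⟨xmax, hxmaxK, hxmaxval⟩ := hSne.csSup_mem hSfin
  have hxminle : ∀ y ∈ K, mIdx n V xmin ≤ mIdx n V y := by
    intro y hy
    rw [hxminval]
    exact Nat.sInf_le ⟨y, hy, rfl⟩
  have hxmaxge : ∀ y ∈ K, mIdx n V y ≤ mIdx n V xmax := by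
    intro y hy
    rw [hxmaxval]
    exact le_csSup hSfin.bddAbove ⟨y, hy, rfl⟩
  set ρ₀ : ℝ := min (lam / 8) δ with hρ₀def
  have hρ₀pos : 0 < ρ₀ := lt_min (by linarith) hδpos
  -- KEY STEP: for every small ρ, W is contained in the ρ-collar of K × K
  have key : ∀ ρ : ℝ, 0 < ρ → ρ ≤ ρ₀ → ∀ z ∈ W, infDist z.1 K ≤ ρ ∧ infDist z.2 K ≤ ρ := by
    intro ρ hρpos hρle
    have hρδ : ρ ≤ δ := le_trans hρle (min_le_right _ _)
    have hρlam : ρ ≤ lam / 8 := le_trans hρle (min_le_left _ _)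
    set Kρ : Set X := {u : X | infDist u K ≤ ρ} with hKρdef
    have hKρclosed : IsClosed Kρ := isClosed_le (continuous_infDist_pt K) continuous_const
    have hKKρ : K ⊆ Kρ := by
      intro u hu
      show infDist u K ≤ ρ
      rw [infDist_zero_of_mem hu]
      linarith
    have hnear : ∀ u ∈ Kρ, ∃ x ∈ K, dist u x ≤ ρ := by
      intro u hu
      obtain ⟨x, hxK, hxd⟩ := hKcomp.exists_infDist_eq_dist hKne u
      exact ⟨x, hxK, by rw [← hxd]; exact hu⟩
    set mt : X → ℕ := fun u => sInf {j | ∃ x, x ∈ K ∧ dist u x ≤ ρ ∧ mIdx n V x = j}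
      with hmtdef
    have hmt_spec : ∀ u ∈ Kρ, ∃ x, x ∈ K ∧ dist u x ≤ ρ ∧ mIdx n V x = mt u := by
      intro u hu
      obtain ⟨x, hxK, hxd⟩ := hnear u hu
      have hne : {j | ∃ x, x ∈ K ∧ dist u x ≤ ρ ∧ mIdx n V x = j}.Nonempty :=
        ⟨mIdx n V x, x, hxK, hxd, rfl⟩
      exact Nat.sInf_mem hne
    have hmt_le : ∀ (u x : X), x ∈ K → dist u x ≤ ρ → mt u ≤ mIdx n V x :=
      fun u x hx hd => Nat.sInf_le ⟨x, hx, hd, rfl⟩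
    have hmt_lb : ∀ u ∈ Kρ, ∀ x, x ∈ K → dist u x ≤ ρ →
        (mIdx n V x : ℤ) - 1 ≤ (mt u : ℤ) := by
      intro u hu x hxK hxd
      obtain ⟨x', hx'K, hx'd, hx'm⟩ := hmt_spec u hu
      have hdd : dist x x' < lam := by
        have h1 := dist_triangle x u x'
        have h2 : dist x u ≤ ρ := by rw [dist_comm]; exact hxd
        linarith
      have hf := hF1 x hxK x' hx'K hdd
      rw [abs_le] at hf
      omega
    have hmt_ge_min : ∀ u ∈ Kρ, mIdx n V xmin ≤ mt u := by
      intro u hu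
      obtain ⟨x', hx'K, _, hx'm⟩ := hmt_spec u hu
      rw [← hx'm]
      exact hxminle x' hx'K
    have hmt_le_max : ∀ u ∈ Kρ, mt u ≤ mIdx n V xmax := by
      intro u hu
      obtain ⟨x', hx'K, _, hx'm⟩ := hmt_spec u hu
      rw [← hx'm]
      exact hxmaxge x' hx'K
    have hdistself : ∀ x : X, dist x x ≤ ρ := fun x => by
      rw [dist_self]; exact hρpos.le
    have hmtK_le : ∀ x, x ∈ K → mt x ≤ mIdx n V x := by
      intro x hx
      exact hmt_le x x hx (hdistself x)
    set g : X × X → ℤ := fun z => (mt z.1 : ℤ) - (mt z.2 : ℤ) with hgdef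
    set Wρ : Set (X × X) := W ∩ (Kρ ×ˢ Kρ) with hWρdef
    have hWρcomp : IsCompact Wρ := hWcomp.inter_right (hKρclosed.prod hKρclosed)
    have habWρ : (a, b) ∈ Wρ := ⟨hzW, hKKρ ha, hKKρ hb⟩
    -- margin: |g| ≥ 7 on Wρ
    have hmargin : ∀ z ∈ Wρ, 7 ≤ |g z| := by
      intro z hz
      by_contra hcon
      push_neg at hcon
      obtain ⟨xu, hxuK, hxud⟩ := hnear z.1 hz.2.1
      obtain ⟨xv, hxvK, hxvd⟩ := hnear z.2 hz.2.2
      have h1 := hmt_lb z.1 hz.2.1 xu hxuK hxud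
      have h2 := hmt_le z.1 xu hxuK hxud
      have h3 := hmt_lb z.2 hz.2.2 xv hxvK hxvd
      have h4 := hmt_le z.2 xv hxvK hxvd
      have h8 : |(mIdx n V xu : ℤ) - (mIdx n V xv : ℤ)| ≤ (8 : ℕ) := by
        rw [abs_lt] at hcon
        rw [abs_le]
        simp only [hgdef] at hcon
        omega
      have hd := hdist 8 xu hxuK xv hxvK h8
      have htri : dist z.1 z.2 ≤ dist z.1 xu + dist xu xv + dist xv z.2 :=
        dist_triangle4 z.1 xu xv z.2
      have hxvz : dist xv z.2 ≤ ρ := by rw [dist_comm]; exact hxvd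
      have hε := hmin z hz.1
      have hd9 : dist xu xv < 9 * δ := by
        norm_num at hd
        linarith
      linarith
    -- local jump bound for g
    have hjump : ∀ z ∈ Wρ, ∀ w ∈ Wρ, dist z w < lam / 2 → |g z - g w| ≤ 6 := by
      intro z hz w hw hzw
      have hcoord : ∀ (u v : X), u ∈ Kρ → v ∈ Kρ → dist u v < lam / 2 →
          |(mt u : ℤ) - (mt v : ℤ)| ≤ 3 := by
        intro u v hu hv huv
        obtain ⟨xu, hxuK, hxud⟩ := hnear u hu
        obtain ⟨xv, hxvK, hxvd⟩ := hnear v hv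
        have hxx : dist xu xv < lam := by
          have t1 := dist_triangle4 xu u v xv
          have t2 : dist xu u ≤ ρ := by rw [dist_comm]; exact hxud
          linarith
        have hf := hF1 xu hxuK xv hxvK hxx
        have l1 := hmt_lb u hu xu hxuK hxud
        have l2 := hmt_le u xu hxuK hxud
        have l3 := hmt_lb v hv xv hxvK hxvd
        have l4 := hmt_le v xv hxvK hxvd
        rw [abs_le] at hf ⊢
        omega
      have hc1 : dist z.1 w.1 < lam / 2 :=
        lt_of_le_of_lt (by rw [Prod.dist_eq]; exact le_max_left _ _) hzw
      have hc2 : dist z.2 w.2 < lam / 2 :=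
        lt_of_le_of_lt (by rw [Prod.dist_eq]; exact le_max_right _ _) hzw
      have k1 := hcoord z.1 w.1 hz.2.1 hw.2.1 hc1
      have k2 := hcoord z.2 w.2 hz.2.2 hw.2.2 hc2
      rw [abs_le] at k1 k2 ⊢
      simp only [hgdef]
      omega
    have hlam2pos : 0 < lam / 2 := by linarith
    -- the two open sides
    set Op : Set (X × X) := ⋃ z ∈ {z | z ∈ Wρ ∧ 7 ≤ g z}, ball z (lam / 2) with hOpdef
    set Om : Set (X × X) := ⋃ z ∈ {z | z ∈ Wρ ∧ g z ≤ -7}, ball z (lam / 2) with hOmdef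
    have hOpopen : IsOpen Op := isOpen_biUnion fun _ _ => isOpen_ball
    have hOmopen : IsOpen Om := isOpen_biUnion fun _ _ => isOpen_ball
    have hstepP : ∀ w ∈ Wρ, w ∈ Op → 7 ≤ g w := by
      intro w hw hwO
      obtain ⟨z, hzset, hwball⟩ := mem_iUnion₂.mp hwO
      have hd : dist w z < lam / 2 := mem_ball.mp hwball
      have hj := hjump w hw z hzset.1 hd
      rcases le_abs.mp (hmargin w hw) with h | h
      · exact h
      · rw [abs_le] at hj
        have := hzset.2
        omega
    have hstepM : ∀ w ∈ Wρ, w ∈ Om → g w ≤ -7 := by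
      intro w hw hwO
      obtain ⟨z, hzset, hwball⟩ := mem_iUnion₂.mp hwO
      have hd : dist w z < lam / 2 := mem_ball.mp hwball
      have hj := hjump w hw z hzset.1 hd
      rcases le_abs.mp (hmargin w hw) with h | h
      · rw [abs_le] at hj
        have := hzset.2
        omega
      · omega
    have hcovρ : ∀ z ∈ Wρ, z ∈ Op ∪ Om := by
      intro z hz
      rcases le_abs.mp (hmargin z hz) with h | h
      · exact Or.inl (mem_biUnion ⟨hz, h⟩ (mem_ball_self hlam2pos))
      · exact Or.inr (mem_biUnion ⟨hz, by omega⟩ (mem_ball_self hlam2pos))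
    -- the connected component of (a,b) in Wρ (as a subtype)
    haveI hWρcs : CompactSpace ↥Wρ := isCompact_iff_compactSpace.mp hWρcomp
    set p₀ : ↥Wρ := ⟨(a, b), habWρ⟩ with hp₀def
    set ΓA : Set (X × X) := (↑) '' connectedComponent p₀ with hΓAdef
    have hΓsub : ΓA ⊆ Wρ := by rintro _ ⟨q, _, rfl⟩; exact q.2
    have habΓ : (a, b) ∈ ΓA := ⟨p₀, mem_connectedComponent, rfl⟩
    have hΓconn : IsConnected ΓA :=
      isConnected_connectedComponent.image _ continuous_subtype_val.continuousOn
    have hΓcomp : IsCompact ΓA :=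
      (isClosed_connectedComponent.isCompact).image continuous_subtype_val
    -- the component is sign-locked
    have hΓsign : (∀ z ∈ ΓA, 7 ≤ g z) ∨ (∀ z ∈ ΓA, g z ≤ -7) := by
      have hnosplit : ¬ ((ΓA ∩ Op).Nonempty ∧ (ΓA ∩ Om).Nonempty) := by
        rintro ⟨h1, h2⟩
        obtain ⟨t, htΓ, htp, htm⟩ := hΓconn.isPreconnected Op Om hOpopen hOmopen
          (fun y hy => hcovρ y (hΓsub hy)) h1 h2
        have := hstepP t (hΓsub htΓ) htp
        have := hstepM t (hΓsub htΓ) htm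
        omega
      rcases le_abs.mp (hmargin _ habWρ) with h | h
      · left
        intro z hzΓ
        rcases le_abs.mp (hmargin z (hΓsub hzΓ)) with h' | h'
        · exact h'
        · exfalso
          apply hnosplit
          constructor
          · exact ⟨(a, b), habΓ, mem_biUnion ⟨habWρ, h⟩ (mem_ball_self hlam2pos)⟩
          · exact ⟨z, hzΓ, mem_biUnion ⟨hΓsub hzΓ, by omega⟩ (mem_ball_self hlam2pos)⟩
      · right
        intro z hzΓ
        rcases le_abs.mp (hmargin z (hΓsub hzΓ)) with h' | h'
        · exfalso
          apply hnosplit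
          constructor
          · exact ⟨z, hzΓ, mem_biUnion ⟨hΓsub hzΓ, h'⟩ (mem_ball_self hlam2pos)⟩
          · exact ⟨(a, b), habΓ, mem_biUnion ⟨habWρ, by omega⟩ (mem_ball_self hlam2pos)⟩
        · omega
    -- terminality traps the component inside K × K
    have hΓK : ΓA ⊆ K ×ˢ K := by
      have hπ1 : Prod.fst '' ΓA ⊆ K := by
        rcases hterm (Prod.fst '' ΓA)
            ⟨hΓcomp.image continuous_fst, hΓconn.image _ continuous_fst.continuousOn⟩
            ⟨a, ha, ⟨(a, b), habΓ, rfl⟩⟩ with hKsub | hsub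
        · exfalso
          rcases hΓsign with hall | hall
          · obtain ⟨z', hz'Γ, hz'eq⟩ := hKsub hxminK
            have h1 : mt z'.1 ≤ mIdx n V xmin := by
              rw [hz'eq]
              exact hmtK_le xmin hxminK
            have h2 : mIdx n V xmin ≤ mt z'.2 := hmt_ge_min z'.2 (hΓsub hz'Γ).2.2
            have := hall z' hz'Γ
            simp only [hgdef] at this
            omega
          · obtain ⟨z', hz'Γ, hz'eq⟩ := hKsub hxmaxK
            have h1 : (mIdx n V xmax : ℤ) - 1 ≤ (mt z'.1 : ℤ) := by
              rw [hz'eq]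
              exact hmt_lb xmax (hKKρ hxmaxK) xmax hxmaxK (hdistself xmax)
            have h2 : mt z'.2 ≤ mIdx n V xmax := hmt_le_max z'.2 (hΓsub hz'Γ).2.2
            have := hall z' hz'Γ
            simp only [hgdef] at this
            omega
        · exact hsub
      have hπ2 : Prod.snd '' ΓA ⊆ K := by
        rcases hterm (Prod.snd '' ΓA)
            ⟨hΓcomp.image continuous_snd, hΓconn.image _ continuous_snd.continuousOn⟩
            ⟨b, hb, ⟨(a, b), habΓ, rfl⟩⟩ with hKsub | hsub
        · exfalso
          rcases hΓsign with hall | hall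
          · obtain ⟨z', hz'Γ, hz'eq⟩ := hKsub hxmaxK
            have h1 : mt z'.1 ≤ mIdx n V xmax := hmt_le_max z'.1 (hΓsub hz'Γ).2.1
            have h2 : (mIdx n V xmax : ℤ) - 1 ≤ (mt z'.2 : ℤ) := by
              rw [hz'eq]
              exact hmt_lb xmax (hKKρ hxmaxK) xmax hxmaxK (hdistself xmax)
            have := hall z' hz'Γ
            simp only [hgdef] at this
            omega
          · obtain ⟨z', hz'Γ, hz'eq⟩ := hKsub hxminK
            have h1 : mIdx n V xmin ≤ mt z'.1 := hmt_ge_min z'.1 (hΓsub hz'Γ).2.1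
            have h2 : mt z'.2 ≤ mIdx n V xmin := by
              rw [hz'eq]
              exact hmtK_le xmin hxminK
            have := hall z' hz'Γ
            simp only [hgdef] at this
            omega
        · exact hsub
      intro z hz
      exact ⟨hπ1 ⟨z, hz, rfl⟩, hπ2 ⟨z, hz, rfl⟩⟩
    -- K × K does not meet the closure of W \ Wρ
    set D : Set (X × X) := closure (W \ Wρ) with hDdef
    have hDclosed : IsClosed D := isClosed_closure
    have hKD : (K ×ˢ K) ∩ D = ∅ := by
      set E : Set (X × X) := {z | ρ ≤ max (infDist z.1 K) (infDist z.2 K)} with hEdef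
      have hEclosed : IsClosed E :=
        isClosed_le continuous_const
          (((continuous_infDist_pt K).comp continuous_fst).max
            ((continuous_infDist_pt K).comp continuous_snd))
      have hsubE : W \ Wρ ⊆ E := by
        intro z hz
        have h1 : z.1 ∉ Kρ ∨ z.2 ∉ Kρ := by
          by_contra hc
          push_neg at hc
          exact hz.2 ⟨hz.1, hc.1, hc.2⟩
        show ρ ≤ max (infDist z.1 K) (infDist z.2 K)
        rcases h1 with h | h
        · have : ρ < infDist z.1 K := not_le.mp h
          exact le_trans this.le (le_max_left _ _)
        · have : ρ < infDist z.2 K := not_le.mp h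
          exact le_trans this.le (le_max_right _ _)
      have hDE : D ⊆ E := closure_minimal hsubE hEclosed
      rw [eq_empty_iff_forall_notMem]
      rintro z ⟨hzK, hzD⟩
      have := hDE hzD
      rw [mem_prod] at hzK
      have h1 : infDist z.1 K = 0 := infDist_zero_of_mem hzK.1
      have h2 : infDist z.2 K = 0 := infDist_zero_of_mem hzK.2
      rw [hEdef] at this
      simp only [mem_setOf_eq, h1, h2, max_self] at this
      linarith
    -- extract a clopen neighbourhood of the component avoiding D
    have hcompD : connectedComponent p₀ ∩ ((↑) ⁻¹' D : Set ↥Wρ) = ∅ := by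
      rw [eq_empty_iff_forall_notMem]
      rintro q ⟨hq1, hq2⟩
      have hq3 : (q : X × X) ∈ (K ×ˢ K) ∩ D := ⟨hΓK ⟨q, hq1, rfl⟩, hq2⟩
      rw [hKD] at hq3
      exact hq3
    obtain ⟨Vc, hVcclopen, hp₀Vc, hVcD⟩ := exists_isClopen_avoiding p₀ _
      (hDclosed.preimage continuous_subtype_val) hcompD
    obtain ⟨O₁, hO₁open, hO₁pre⟩ := isOpen_induced_iff.mp hVcclopen.2
    set VA : Set (X × X) := (↑) '' Vc with hVAdef
    have hVAcomp : IsCompact VA := (hVcclopen.1.isCompact).image continuous_subtype_val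
    have hVAclosed : IsClosed VA := hVAcomp.isClosed
    have habVA : (a, b) ∈ VA := ⟨p₀, hp₀Vc, rfl⟩
    have hVAeq : VA = Wρ ∩ O₁ := by
      ext z
      constructor
      · rintro ⟨q, hq, rfl⟩
        refine ⟨q.2, ?_⟩
        rw [← hO₁pre] at hq
        exact hq
      · rintro ⟨hzW, hzO⟩
        refine ⟨⟨z, hzW⟩, ?_, rfl⟩
        rw [← hO₁pre]
        exact hzO
    have hVAD : VA ∩ D = ∅ := by
      rw [eq_empty_iff_forall_notMem]
      rintro z ⟨⟨q, hq, rfl⟩, hzD⟩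
      have : q ∈ Vc ∩ ((↑) ⁻¹' D : Set ↥Wρ) := ⟨hq, hzD⟩
      rw [hVcD] at this
      exact this
    -- W is contained in VA, hence in the collar
    have hWVA : W ⊆ VA := by
      set O₂ : Set (X × X) := O₁ ∩ Dᶜ with hO₂def
      have hO₂open : IsOpen O₂ := hO₁open.inter hDclosed.isOpen_compl
      have hWO₂ : W ∩ O₂ ⊆ VA := by
        rintro z ⟨hzW', hzO₁, hzDc⟩
        have hzWρ : z ∈ Wρ := by
          by_contra hc
          exact hzDc (subset_closure ⟨hzW', hc⟩)
        rw [hVAeq]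
        exact ⟨hzWρ, hzO₁⟩
      have hVAO₂ : VA ⊆ O₂ := by
        intro z hz
        have hz1 : z ∈ Wρ ∩ O₁ := hVAeq ▸ hz
        refine ⟨hz1.2, fun hzD => ?_⟩
        have : z ∈ VA ∩ D := ⟨hz, hzD⟩
        rw [hVAD] at this
        exact this
      by_contra hc
      have hex : ∃ w', w' ∈ W ∧ w' ∉ VA := by
        by_contra hc2
        push_neg at hc2
        exact hc fun z hz => hc2 z hz
      obtain ⟨w', hw'W, hw'VA⟩ := hex
      obtain ⟨t, htW, ht₂, htc⟩ := hWconn.isPreconnected O₂ VAᶜ hO₂open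
          hVAclosed.isOpen_compl
          (fun z hzW' => by
            by_cases hzVA : z ∈ VA
            · exact Or.inl (hVAO₂ hzVA)
            · exact Or.inr hzVA)
          ⟨(a, b), hzW, hVAO₂ habVA⟩ ⟨w', hw'W, hw'VA⟩
      exact htc (hWO₂ ⟨htW, ht₂⟩)
    intro z hz
    have hzVA := hWVA hz
    have hzWρ : z ∈ Wρ := by
      rw [hVAeq] at hzVA
      exact hzVA.1
    exact ⟨hzWρ.2.1, hzWρ.2.2⟩
  -- conclude that W lies in K × K
  have hWK : ∀ z ∈ W, z.1 ∈ K ∧ z.2 ∈ K := by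
    have hmem : ∀ u : X, (∀ ρ : ℝ, 0 < ρ → ρ ≤ ρ₀ → infDist u K ≤ ρ) → u ∈ K := by
      intro u hu
      have h0 : infDist u K ≤ 0 := by
        by_contra hpos
        push_neg at hpos
        have h1 := hu (min ρ₀ (infDist u K / 2)) (lt_min hρ₀pos (by linarith))
          (min_le_left _ _)
        have h2 : min ρ₀ (infDist u K / 2) ≤ infDist u K / 2 := min_le_right _ _
        linarith
      have : infDist u K = 0 := le_antisymm h0 infDist_nonneg
      exact (hKcomp.isClosed.mem_iff_infDist_zero hKne).mpr this
    intro z hz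
    constructor
    · exact hmem z.1 fun ρ h1 h2 => (key ρ h1 h2 z hz).1
    · exact hmem z.2 fun ρ h1 h2 => (key ρ h1 h2 z hz).2
  -- final contradiction using the plain chart on K × K
  set g0 : X × X → ℤ := fun z => (mIdx n V z.1 : ℤ) - (mIdx n V z.2 : ℤ) with hg0def
  have hmargin0 : ∀ z ∈ W, 8 ≤ |g0 z| := by
    intro z hz
    by_contra hcon
    push_neg at hcon
    have h7 : |(mIdx n V z.1 : ℤ) - (mIdx n V z.2 : ℤ)| ≤ ((7 : ℕ) : ℤ) := by
      rw [abs_lt] at hcon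
      rw [abs_le]
      simp only [hg0def] at hcon
      omega
    have hd := hdist 7 z.1 (hWK z hz).1 z.2 (hWK z hz).2 h7
    have hε := hmin z hz
    norm_num at hd
    linarith
  have hjump0 : ∀ z ∈ W, ∀ w ∈ W, dist z w < lam → |g0 z - g0 w| ≤ 2 := by
    intro z hz w hw hzw
    have hc1 : dist z.1 w.1 < lam :=
      lt_of_le_of_lt (by rw [Prod.dist_eq]; exact le_max_left _ _) hzw
    have hc2 : dist z.2 w.2 < lam :=
      lt_of_le_of_lt (by rw [Prod.dist_eq]; exact le_max_right _ _) hzw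
    have k1 := hF1 z.1 (hWK z hz).1 w.1 (hWK w hw).1 hc1
    have k2 := hF1 z.2 (hWK z hz).2 w.2 (hWK w hw).2 hc2
    rw [abs_le] at k1 k2 ⊢
    simp only [hg0def]
    omega
  set Op0 : Set (X × X) := ⋃ z ∈ {z | z ∈ W ∧ 8 ≤ g0 z}, ball z lam with hOp0def
  set Om0 : Set (X × X) := ⋃ z ∈ {z | z ∈ W ∧ g0 z ≤ -8}, ball z lam with hOm0def
  have hOp0open : IsOpen Op0 := isOpen_biUnion fun _ _ => isOpen_ball
  have hOm0open : IsOpen Om0 := isOpen_biUnion fun _ _ => isOpen_ball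
  have hstepP0 : ∀ w ∈ W, w ∈ Op0 → 8 ≤ g0 w := by
    intro w hw hwO
    obtain ⟨z, hzset, hwball⟩ := mem_iUnion₂.mp hwO
    have hd : dist w z < lam := mem_ball.mp hwball
    have hj := hjump0 w hw z hzset.1 hd
    rcases le_abs.mp (hmargin0 w hw) with h | h
    · exact h
    · rw [abs_le] at hj
      have := hzset.2
      omega
  have hstepM0 : ∀ w ∈ W, w ∈ Om0 → g0 w ≤ -8 := by
    intro w hw hwO
    obtain ⟨z, hzset, hwball⟩ := mem_iUnion₂.mp hwO
    have hd : dist w z < lam := mem_ball.mp hwball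
    have hj := hjump0 w hw z hzset.1 hd
    rcases le_abs.mp (hmargin0 w hw) with h | h
    · rw [abs_le] at hj
      have := hzset.2
      omega
    · omega
  have hcov0 : W ⊆ Op0 ∪ Om0 := by
    intro z hz
    rcases le_abs.mp (hmargin0 z hz) with h | h
    · exact Or.inl (mem_biUnion ⟨hz, h⟩ (mem_ball_self hlampos))
    · exact Or.inr (mem_biUnion ⟨hz, by omega⟩ (mem_ball_self hlampos))
  have hanti : g0 (b, a) = -g0 (a, b) := by
    simp only [hg0def]
    ring
  have hfinal : (W ∩ (Op0 ∩ Om0)).Nonempty := by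
    rcases le_abs.mp (hmargin0 _ hzW) with h | h
    · refine hWconn.isPreconnected Op0 Om0 hOp0open hOm0open hcov0
        ⟨(a, b), hzW, mem_biUnion ⟨hzW, h⟩ (mem_ball_self hlampos)⟩
        ⟨(b, a), hwW, mem_biUnion ⟨hwW, by omega⟩ (mem_ball_self hlampos)⟩
    · refine hWconn.isPreconnected Op0 Om0 hOp0open hOm0open hcov0
        ⟨(b, a), hwW, mem_biUnion ⟨hwW, by omega⟩ (mem_ball_self hlampos)⟩
        ⟨(a, b), hzW, mem_biUnion ⟨hzW, by omega⟩ (mem_ball_self hlampos)⟩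
  obtain ⟨t, htW, htp, htm⟩ := hfinal
  have h1 := hstepP0 t htW htp
  have h2 := hstepM0 t htW htm
  omega


/-- Let `X` be a continuum and `K` a nondegenerate terminal subcontinuum of `X` which
is chainable (as a subspace). Then `X² \ Δ_X` is not continuumwise connected: there are
points `z, w` off the diagonal joined by no subcontinuum of `X²` missing the diagonal. -/
theorem stmt7 {X : Type*} [MetricSpace X] [CompactSpace X] [ConnectedSpace X]
    (K : Set X) (hK : IsTerminalSubcontinuum K)
    (hnd : ∃ x ∈ K, ∃ y ∈ K, x ≠ y) (hch : IsChainable ↥K) :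
    ∃ z w : X × X, z ∉ {p : X × X | p.1 = p.2} ∧ w ∉ {p : X × X | p.1 = p.2} ∧
      ¬ ∃ W : Set (X × X), IsSubcontinuum W ∧ W ⊆ {p : X × X | p.1 = p.2}ᶜ ∧
        z ∈ W ∧ w ∈ W := by
  obtain ⟨a, ha, b, hb, hab⟩ := hnd
  have hKcomp : IsCompact K := hK.1.1
  have hKne : K.Nonempty := hK.1.2.1
  haveI hKcs : CompactSpace ↥K := isCompact_iff_compactSpace.mp hKcomp
  -- convert the subtype chain data into ambient relatively-open chains
  have hch' : ∀ ε : ℝ, 0 < ε → ∃ n : ℕ, ∃ V O : ℕ → Set X,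
      (∀ j, IsOpen (O j)) ∧ (∀ j, V j = K ∩ O j) ∧
      (∀ x ∈ K, ∃ j, j ≤ n ∧ x ∈ V j) ∧
      (∀ j, j ≤ n → ∀ x ∈ V j, ∀ y ∈ V j, dist x y < ε) ∧
      (∀ j, j ≤ n → ∀ k, k ≤ n → ((V j ∩ V k).Nonempty ↔ |(j : ℤ) - (k : ℤ)| ≤ 1)) := by
    intro ε hε
    obtain ⟨n, U, hUopen, hUcov, hUdiam, hUadj⟩ := hch ε hε
    have hpre : ∀ j : Fin (n + 1), ∃ O : Set X, IsOpen O ∧ (↑) ⁻¹' O = U j :=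
      fun j => isOpen_induced_iff.mp (hUopen j)
    choose O' hO'open hO'pre using hpre
    set O : ℕ → Set X := fun j => if h : j < n + 1 then O' ⟨j, h⟩ else ∅ with hOdef
    refine ⟨n, fun j => K ∩ O j, O, ?_, fun j => rfl, ?_, ?_, ?_⟩
    · intro j
      by_cases h : j < n + 1
      · simp only [hOdef, dif_pos h]
        exact hO'open _
      · simp only [hOdef, dif_neg h]
        exact isOpen_empty
    · -- covering
      intro x hx
      have : (⟨x, hx⟩ : ↥K) ∈ ⋃ j, U j := by rw [hUcov]; trivial
      obtain ⟨j, hj⟩ := mem_iUnion.mp this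
      refine ⟨(j : ℕ), Nat.lt_succ_iff.mp j.isLt, hx, ?_⟩
      have hlt : (j : ℕ) < n + 1 := j.isLt
      simp only [hOdef, dif_pos hlt]
      have : (⟨(j : ℕ), hlt⟩ : Fin (n + 1)) = j := by
        ext; rfl
      rw [this]
      rw [← hO'pre j] at hj
      exact hj
    · -- smallness
      intro j hj x hx y hy
      have hlt : j < n + 1 := Nat.lt_succ_of_le hj
      set jF : Fin (n + 1) := ⟨j, hlt⟩ with hjF
      have hxU : (⟨x, hx.1⟩ : ↥K) ∈ U jF := by
        rw [← hO'pre jF]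
        have := hx.2
        simp only [hOdef, dif_pos hlt] at this
        exact this
      have hyU : (⟨y, hy.1⟩ : ↥K) ∈ U jF := by
        rw [← hO'pre jF]
        have := hy.2
        simp only [hOdef, dif_pos hlt] at this
        exact this
      have hbdd : Bornology.IsBounded (U jF) :=
        (isCompact_univ.isBounded).subset (subset_univ _)
      have hd : dist (⟨x, hx.1⟩ : ↥K) (⟨y, hy.1⟩ : ↥K) ≤ Metric.diam (U jF) :=
        Metric.dist_le_diam_of_mem hbdd hxU hyU
      have : dist x y = dist (⟨x, hx.1⟩ : ↥K) (⟨y, hy.1⟩ : ↥K) := rfl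
      rw [this]
      exact lt_of_le_of_lt hd (hUdiam jF)
    · -- adjacency
      intro j hj k hk
      have hltj : j < n + 1 := Nat.lt_succ_of_le hj
      have hltk : k < n + 1 := Nat.lt_succ_of_le hk
      set jF : Fin (n + 1) := ⟨j, hltj⟩
      set kF : Fin (n + 1) := ⟨k, hltk⟩
      have hiff := hUadj jF kF
      have hcast : ((jF : ℕ) : ℤ) = (j : ℤ) ∧ ((kF : ℕ) : ℤ) = (k : ℤ) := ⟨rfl, rfl⟩
      constructor
      · rintro ⟨x, ⟨hxK, hxj⟩, ⟨_, hxk⟩⟩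
        have hxj' : (⟨x, hxK⟩ : ↥K) ∈ U jF := by
          rw [← hO'pre jF]
          simp only [hOdef, dif_pos hltj] at hxj
          exact hxj
        have hxk' : (⟨x, hxK⟩ : ↥K) ∈ U kF := by
          rw [← hO'pre kF]
          simp only [hOdef, dif_pos hltk] at hxk
          exact hxk
        have := hiff.mp ⟨_, hxj', hxk'⟩
        rwa [hcast.1, hcast.2] at this
      · intro habs
        have : ((jF : ℕ) : ℤ) = (j : ℤ) := rfl
        obtain ⟨q, hqj, hqk⟩ := hiff.mpr (by rwa [hcast.1, hcast.2])
        refine ⟨(q : X), ⟨q.2, ?_⟩, ⟨q.2, ?_⟩⟩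
        · simp only [hOdef, dif_pos hltj]
          rw [← hO'pre jF] at hqj
          exact hqj
        · simp only [hOdef, dif_pos hltk]
          rw [← hO'pre kF] at hqk
          exact hqk
  refine ⟨(a, b), (b, a), by simpa using hab, by simpa using hab.symm, ?_⟩
  rintro ⟨W, ⟨hWcomp, hWconn⟩, hWsub, hzW, hwW⟩
  exact core hKcomp hKne (fun L hL => hK.2 L hL) hch' ha hb hWcomp hWconn
    (fun z hz => hWsub hz) hzW hwW
end

section
/- Let X and Y be continua, where Y is nondegenerate, locally connected and not an arc, and let f : X → Y be a surjective continuous map that is monotone and open. Then the diagonal Δ_X is a nonblock subcontinuum of X². -/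
open Set Metric

/-!
If the off-diagonal `(diagonal Y)ᶜ` of the locally connected continuum `Y` split into two
nonempty open pieces `A` and `B`, then `x < y ↔ (x, y) ∈ A` would be a linear order on `Y`:
moving one coordinate of a pair in `A` along a connected set avoiding the other coordinate
stays in `A`, and doing so along components of `Y \ {a}` shows that this relation is
asymmetric, transitive and total. Its strict order relation is open, so a countable dense
subset, order-isomorphic to the rationals in `(0, 1)`, yields a homeomorphism `Y ≃ₜ [0, 1]`.

So the off-diagonal of `Y` is an open connected subset of the locally connected compact metric
space `Y × Y`, hence an increasing union of subcontinua `Lₙ`. The map `f × f` is closed with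
connected fibres, so the preimages of the `Lₙ` are subcontinua of `X × X` missing the diagonal;
it is also open, and `Y` has no isolated points, so the union of these preimages is dense.
-/

open Filter Topology

section Subcontinuum

variable {Z : Type*} [TopologicalSpace Z]

theorem IsSubcontinuum.union {K L : Set Z} (hK : IsSubcontinuum K) (hL : IsSubcontinuum L)
    (hKL : (K ∩ L).Nonempty) : IsSubcontinuum (K ∪ L) :=
  ⟨hK.1.union hL.1, IsConnected.union hKL hK.2 hL.2⟩

theorem IsSubcontinuum.preimage {W : Type*} [TopologicalSpace W] [CompactSpace W] [T2Space Z]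
    {g : W → Z} (hg : Continuous g) (hfib : ∀ z, IsConnected (g ⁻¹' {z})) {K : Set Z}
    (hK : IsSubcontinuum K) : IsSubcontinuum (g ⁻¹' K) := by
  have hq : Topology.IsQuotientMap g :=
    .of_surjective_continuous (fun z => (hfib z).nonempty) hg
  exact ⟨(hK.1.isClosed.preimage hg).isCompact,
    hq.isCoinducing.isConnected_preimage_of_isClosed hfib hK.1.isClosed hK.2⟩

theorem isSubcontinuum_diagonal [CompactSpace Z] [T2Space Z] [ConnectedSpace Z] :
    IsSubcontinuum (diagonal Z) :=
  ⟨isClosed_diagonal.isCompact, range_diag ▸ isConnected_range continuous_diag⟩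

theorem interior_diagonal_eq_empty [∀ x : Z, (𝓝[≠] x).NeBot] : interior (diagonal Z) = ∅ := by
  refine eq_empty_of_forall_notMem fun ⟨a, b⟩ hp => ?_
  obtain ⟨u, hu, v, hv, huv⟩ := mem_nhds_prod_iff.1 (mem_interior_iff_mem_nhds.1 hp)
  have hab : a = b := mem_diagonal_iff.1 (interior_subset hp)
  have hua : u ⊆ {a} := fun x hx =>
    (mem_diagonal_iff.1 (huv (mk_mem_prod hx (mem_of_mem_nhds hv)))).trans hab.symm
  simpa [interior_singleton] using interior_mono hua (mem_interior_iff_mem_nhds.2 hu)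

variable [LocallyConnectedSpace Z]

theorem exists_isSubcontinuum_mem_nhds_subset [LocallyCompactSpace Z] [T2Space Z] {U : Set Z}
    {x : Z} (hU : IsOpen U) (hx : x ∈ U) : ∃ N, IsSubcontinuum N ∧ N ∈ 𝓝 x ∧ N ⊆ U := by
  obtain ⟨K, hK, hxK, hKU⟩ := exists_compact_subset hU hx
  have hclK : closure (connectedComponentIn (interior K) x) ⊆ K :=
    closure_minimal ((connectedComponentIn_subset _ _).trans interior_subset) hK.isClosed
  refine ⟨_, ⟨hK.of_isClosed_subset isClosed_closure hclK,
    (isConnected_connectedComponentIn_iff.2 hxK).closure⟩, ?_, hclK.trans hKU⟩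
  exact mem_of_superset (isOpen_interior.connectedComponentIn.mem_nhds
    (mem_connectedComponentIn hxK)) subset_closure

theorem IsPreconnected.exists_isSubcontinuum_subset [LocallyCompactSpace Z] [T2Space Z]
    {U : Set Z} (hU : IsPreconnected U) (hUo : IsOpen U) {x y : Z} (hx : x ∈ U) (hy : y ∈ U) :
    ∃ K, IsSubcontinuum K ∧ K ⊆ U ∧ x ∈ K ∧ y ∈ K := by
  refine hU.induction₂' (fun x y => ∃ K, IsSubcontinuum K ∧ K ⊆ U ∧ x ∈ K ∧ y ∈ K)
    (fun z hz => ?_) ?_ hx hy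
  · obtain ⟨N, hN, hNz, hNU⟩ := exists_isSubcontinuum_mem_nhds_subset hUo hz
    filter_upwards [mem_nhdsWithin_of_mem_nhds hNz] with w hw
    exact ⟨⟨N, hN, hNU, mem_of_mem_nhds hNz, hw⟩, ⟨N, hN, hNU, hw, mem_of_mem_nhds hNz⟩⟩
  · rintro a b c - - - ⟨K, hK, hKU, haK, hbK⟩ ⟨L, hL, hLU, hbL, hcL⟩
    exact ⟨K ∪ L, hK.union hL ⟨b, hbK, hbL⟩, union_subset hKU hLU, Or.inl haK, Or.inr hcL⟩

end Subcontinuum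

theorem IsConnected.exists_monotone_isSubcontinuum_iUnion_eq {Z : Type*} [MetricSpace Z]
    [CompactSpace Z] [LocallyConnectedSpace Z] {U : Set Z} (hU : IsConnected U)
    (hUo : IsOpen U) :
    ∃ L : ℕ → Set Z, (∀ n, IsSubcontinuum (L n)) ∧ (∀ n, L n ⊆ U) ∧ Monotone L ∧
      ⋃ n, L n = U := by
  set V : ℕ → Set Z := fun n => (cthickening (1 / ((n : ℝ) + 1)) Uᶜ)ᶜ
  have hVo : ∀ n, IsOpen (V n) := fun n => isClosed_cthickening.isOpen_compl
  have hVmono : Monotone V := fun m n hmn => compl_subset_compl.2 <| cthickening_mono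
    (one_div_le_one_div_of_le (by positivity) (by exact_mod_cast Nat.add_le_add_right hmn 1)) _
  have hVU : ∀ n, closure (V n) ⊆ U := fun n =>
    (closure_minimal (compl_subset_compl.2 (thickening_subset_cthickening _ _))
      isOpen_thickening.isClosed_compl).trans
      (compl_subset_comm.1 (self_subset_thickening Nat.one_div_pos_of_nat _))
  have hUV : U ⊆ ⋃ n, V n := by
    intro x hx
    have hx' : x ∉ closure Uᶜ := by rwa [hUo.isClosed_compl.closure_eq, notMem_compl_iff]
    simp only [closure_eq_iInter_cthickening, mem_iInter, not_forall] at hx'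
    obtain ⟨δ, hδ, hxδ⟩ := hx'
    obtain ⟨n, hn⟩ := exists_nat_one_div_lt hδ
    exact mem_iUnion.2 ⟨n, fun h => hxδ (cthickening_mono hn.le _ h)⟩
  obtain ⟨p, hp⟩ := hU.nonempty
  obtain ⟨N, hN⟩ := mem_iUnion.1 (hUV hp)
  set L : ℕ → Set Z := fun n => closure (connectedComponentIn (V (n + N)) p)
  have hLU : ∀ n, L n ⊆ U := fun n => (closure_mono (connectedComponentIn_subset _ _)).trans (hVU _)
  refine ⟨L, fun n => ⟨isClosed_closure.isCompact, (isConnected_connectedComponentIn_iff.2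
    (hVmono (Nat.le_add_left N n) hN)).closure⟩, hLU, fun m n hmn => closure_mono
    (connectedComponentIn_mono p (hVmono (Nat.add_le_add_right hmn N))),
    subset_antisymm (iUnion_subset hLU) fun x hx => ?_⟩
  obtain ⟨K, hK, hKU, hpK, hxK⟩ := hU.isPreconnected.exists_isSubcontinuum_subset hUo hp hx
  obtain ⟨n, hn⟩ := hK.1.elim_directed_cover V hVo (hKU.trans hUV) hVmono.directed_le
  exact mem_iUnion.2 ⟨n, subset_closure (hK.2.isPreconnected.subset_connectedComponentIn hpK
    (hn.trans (hVmono (Nat.le_add_right n N))) hxK)⟩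

section OrderedContinuum

variable {Y : Type*} [TopologicalSpace Y] [LinearOrder Y] [OrderClosedTopology Y]

theorem orderTopology_of_compactSpace [CompactSpace Y] : OrderTopology Y := by
  refine ⟨le_antisymm (le_generateFrom ?_) ?_⟩
  · rintro s ⟨a, rfl | rfl⟩
    exacts [isOpen_Ioi, isOpen_Iio]
  · -- `id` from `Y` to `Y` with the order topology is a closed map: compact to Hausdorff.
    rw [TopologicalSpace.le_def]
    intro U hU
    have hT2 : @T2Space Y (Preorder.topology Y) := by
      let := Preorder.topology Y
      have : OrderTopology Y := ⟨rfl⟩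
      infer_instance
    have hid : @Continuous Y Y _ (Preorder.topology Y) id := by
      refine continuous_generateFrom_iff.2 ?_
      rintro s ⟨a, rfl | rfl⟩
      exacts [isOpen_Ioi, isOpen_Iio]
    have := @Continuous.isClosedMap _ _ _ (Preorder.topology Y) _ hT2 _ hid Uᶜ hU.isClosed_compl
    simpa using this.isOpen_compl

theorem exists_strictMono_rat_dense [DenselyOrdered Y] [TopologicalSpace.SeparableSpace Y]
    [Nontrivial Y] :
    ∃ ψ : Ioo (0 : ℚ) 1 → Y, StrictMono ψ ∧ ∀ ⦃x y⦄, x < y → ∃ q, ψ q ∈ Ioo x y := by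
  obtain ⟨D, hDc, hDd⟩ := TopologicalSpace.exists_countable_dense Y
  let E : Set Y := {d ∈ D | (∃ a, a < d) ∧ ∃ b, d < b}
  have hE : ∀ ⦃x y⦄, x < y → ∃ e ∈ E, e ∈ Ioo x y := fun x y h => by
    obtain ⟨d, hd, hxd, hdy⟩ := hDd.exists_mem_open isOpen_Ioo (nonempty_Ioo.2 h)
    exact ⟨d, ⟨hd, ⟨x, hxd⟩, y, hdy⟩, hxd, hdy⟩
  have : Countable E := (hDc.mono fun _ h => h.1).to_subtype
  have : Nonempty E := by
    obtain ⟨x, y, h⟩ := exists_pair_lt Y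
    obtain ⟨e, he, -⟩ := hE h
    exact ⟨⟨e, he⟩⟩
  have : DenselyOrdered E := ⟨fun a b hab => by
    obtain ⟨e, he, h⟩ := hE hab
    exact ⟨⟨e, he⟩, h⟩⟩
  have : NoMinOrder E := ⟨fun a => by
    obtain ⟨c, hc⟩ := a.2.2.1
    obtain ⟨e, he, -, h⟩ := hE hc
    exact ⟨⟨e, he⟩, h⟩⟩
  have : NoMaxOrder E := ⟨fun a => by
    obtain ⟨c, hc⟩ := a.2.2.2
    obtain ⟨e, he, h, -⟩ := hE hc
    exact ⟨⟨e, he⟩, h⟩⟩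
  have : Nonempty (Ioo (0 : ℚ) 1) := ⟨⟨1 / 2, by norm_num, by norm_num⟩⟩
  obtain ⟨φ⟩ := Order.iso_of_countable_dense (Ioo (0 : ℚ) 1) E
  refine ⟨fun q => φ q, fun q r h => φ.strictMono h, fun x y h => ?_⟩
  obtain ⟨e, he, hxe⟩ := hE h
  exact ⟨φ.symm ⟨e, he⟩, by simpa using hxe⟩

end OrderedContinuum

section RatCut

variable {Y : Type*} [LinearOrder Y] {ψ : Ioo (0 : ℚ) 1 → Y}

noncomputable def ratCut (ψ : Ioo (0 : ℚ) 1 → Y) (y : Y) : ℝ :=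
  sSup ((fun q : Ioo (0 : ℚ) 1 => ((q : ℚ) : ℝ)) '' {q | ψ q < y})

theorem le_ratCut {y : Y} {q : Ioo (0 : ℚ) 1} (h : ψ q < y) : ((q : ℚ) : ℝ) ≤ ratCut ψ y := by
  refine le_csSup ⟨1, ?_⟩ ⟨q, h, rfl⟩
  rintro _ ⟨r, -, rfl⟩
  show ((r : ℚ) : ℝ) ≤ 1
  exact_mod_cast r.2.2.le

theorem ratCut_le (hψ : StrictMono ψ) {y : Y} {q : Ioo (0 : ℚ) 1} (h : y ≤ ψ q) :
    ratCut ψ y ≤ ((q : ℚ) : ℝ) := by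
  refine Real.sSup_le ?_ (by exact_mod_cast q.2.1.le)
  rintro _ ⟨r, hr, rfl⟩
  show ((r : ℚ) : ℝ) ≤ q
  exact_mod_cast (hψ.lt_iff_lt.1 (lt_of_lt_of_le hr h)).le

theorem ratCut_mem_Icc (y : Y) : ratCut ψ y ∈ Icc (0 : ℝ) 1 := by
  refine ⟨Real.sSup_nonneg ?_, Real.sSup_le ?_ zero_le_one⟩ <;> rintro _ ⟨r, -, rfl⟩ <;> dsimp only
  exacts [by exact_mod_cast r.2.1.le, by exact_mod_cast r.2.2.le]

theorem ratCut_apply (hψ : StrictMono ψ) (q : Ioo (0 : ℚ) 1) : ratCut ψ (ψ q) = q := by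
  refine le_antisymm (ratCut_le hψ le_rfl) (le_of_forall_lt fun c hc => ?_)
  obtain ⟨r, hcr, hrq⟩ := exists_rat_btwn (max_lt hc (by exact_mod_cast q.2.1) : max c 0 < q)
  have hq1 : ((q : ℚ) : ℝ) < 1 := by exact_mod_cast q.2.2
  have hr : r ∈ Ioo (0 : ℚ) 1 :=
    ⟨by exact_mod_cast (le_max_right c 0).trans_lt hcr, by exact_mod_cast hrq.trans hq1⟩
  have hψr : ψ ⟨r, hr⟩ < ψ q := hψ (by exact_mod_cast hrq)
  exact ((le_max_left c 0).trans_lt hcr).trans_le (le_ratCut hψr)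

theorem ratCut_strictMono (hψ : StrictMono ψ) (hdense : ∀ ⦃x y⦄, x < y → ∃ q, ψ q ∈ Ioo x y) :
    StrictMono (ratCut ψ) := by
  intro x y hxy
  obtain ⟨q, hxq, hqy⟩ := hdense hxy
  obtain ⟨r, hqr, hry⟩ := hdense hqy
  calc ratCut ψ x ≤ q := ratCut_le hψ hxq.le
    _ < r := by exact_mod_cast hψ.lt_iff_lt.1 hqr
    _ ≤ ratCut ψ y := le_ratCut hry

end RatCut

theorem nonempty_homeomorph_Icc_of_orderClosedTopology {Y : Type*} [TopologicalSpace Y]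
    [LinearOrder Y] [OrderClosedTopology Y] [CompactSpace Y] [ConnectedSpace Y]
    [TopologicalSpace.SeparableSpace Y] [Nontrivial Y] : Nonempty (Y ≃ₜ Icc (0 : ℝ) 1) := by
  have := orderTopology_of_compactSpace (Y := Y)
  have := denselyOrdered_of_preconnectedSpace (α := Y)
  obtain ⟨ψ, hψ, hdense⟩ := exists_strictMono_rat_dense (Y := Y)
  let F : Y → Icc (0 : ℝ) 1 := fun y => ⟨ratCut ψ y, ratCut_mem_Icc y⟩
  have hF : StrictMono F := fun x y h => ratCut_strictMono hψ hdense h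
  have hFd : DenseRange F := dense_of_exists_between fun a b hab => by
    obtain ⟨r, har, hrb⟩ := exists_rat_btwn (show (a : ℝ) < b from hab)
    have hr : r ∈ Ioo (0 : ℚ) 1 :=
      ⟨by exact_mod_cast a.2.1.trans_lt har, by exact_mod_cast hrb.trans_le b.2.2⟩
    refine ⟨F (ψ ⟨r, hr⟩), mem_range_self _, ?_⟩
    rw [mem_Ioo, ← Subtype.coe_lt_coe, ← Subtype.coe_lt_coe]
    simpa [F, ratCut_apply hψ] using And.intro har hrb
  have hFc : Continuous F := hF.monotone.continuous_of_denseRange hFd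
  have hFs : Function.Surjective F := by
    rw [← range_eq_univ, ← hFd.closure_range]
    exact (isCompact_range hFc).isClosed.closure_eq.symm
  exact ⟨hFc.homeoOfEquivCompactToT2 (f := Equiv.ofBijective F ⟨hF.injective, hFs⟩)⟩

section ComplSingleton

variable {Z : Type*} [TopologicalSpace Z]

theorem notMem_connectedComponentIn_compl_singleton (a x : Z) :
    a ∉ connectedComponentIn {a}ᶜ x :=
  fun h => connectedComponentIn_subset _ _ h rfl

variable [LocallyConnectedSpace Z]

theorem closure_connectedComponentIn_subset {F : Set Z} (hF : IsOpen F) (x : Z) :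
    closure (connectedComponentIn F x) ⊆ connectedComponentIn F x ∪ Fᶜ := by
  intro s hs
  by_cases hsF : s ∈ F
  · obtain ⟨z, hzs, hzx⟩ := mem_closure_iff.1 hs _ hF.connectedComponentIn
      (mem_connectedComponentIn hsF)
    rw [connectedComponentIn_eq hzx, ← connectedComponentIn_eq hzs]
    exact Or.inl (mem_connectedComponentIn hsF)
  · exact Or.inr hsF

variable [ConnectedSpace Z] [T1Space Z]

theorem mem_closure_connectedComponentIn_compl_singleton {a z : Z} (h : z ≠ a) :
    a ∈ closure (connectedComponentIn {a}ᶜ z) := by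
  by_contra ha
  have hclosed : IsClosed (connectedComponentIn {a}ᶜ z) :=
    closure_subset_iff_isClosed.1 fun s hs =>
      (closure_connectedComponentIn_subset isOpen_compl_singleton z hs).resolve_right
        fun hsa => ha (mem_singleton_iff.1 (compl_compl ({a} : Set Z) ▸ hsa) ▸ hs)
  have huniv := IsClopen.eq_univ ⟨hclosed, isOpen_compl_singleton.connectedComponentIn⟩
    ⟨z, mem_connectedComponentIn h⟩
  exact notMem_connectedComponentIn_compl_singleton a z (huniv ▸ mem_univ a)

theorem mem_connectedComponentIn_compl_singleton_of_notMem {p q r : Z} (hpr : p ≠ r)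
    (hqr : q ≠ r) (hq : q ∉ connectedComponentIn {r}ᶜ p) :
    r ∈ connectedComponentIn {q}ᶜ p := by
  have hsub : connectedComponentIn {r}ᶜ p ⊆ connectedComponentIn {q}ᶜ p :=
    isPreconnected_connectedComponentIn.subset_connectedComponentIn
      (mem_connectedComponentIn hpr) fun x hx (hxq : x = q) => hq (hxq ▸ hx)
  rcases closure_connectedComponentIn_subset isOpen_compl_singleton p
    (closure_mono hsub (mem_closure_connectedComponentIn_compl_singleton hpr)) with h | h
  · exact h
  · exact absurd (by simpa using h) hqr.symm

end ComplSingleton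

structure IsOffDiagSeparation {Y : Type*} [TopologicalSpace Y] (A B : Set (Y × Y)) : Prop where
  isOpen_left : IsOpen A
  isOpen_right : IsOpen B
  disjoint : Disjoint A B
  union_eq : A ∪ B = (diagonal Y)ᶜ

namespace IsOffDiagSeparation

variable {Y : Type*} [TopologicalSpace Y] {A B : Set (Y × Y)} {a b x y z : Y}

theorem symm (h : IsOffDiagSeparation A B) : IsOffDiagSeparation B A :=
  ⟨h.isOpen_right, h.isOpen_left, h.disjoint.symm, by rw [union_comm, h.union_eq]⟩

theorem preimage_swap (h : IsOffDiagSeparation A B) :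
    IsOffDiagSeparation (Prod.swap ⁻¹' A) (Prod.swap ⁻¹' B) := by
  refine ⟨h.isOpen_left.preimage continuous_swap, h.isOpen_right.preimage continuous_swap,
    h.disjoint.preimage _, ?_⟩
  rw [← preimage_union, h.union_eq]
  ext p
  simp [eq_comm]

theorem ne_of_mem_left (h : IsOffDiagSeparation A B) (hxy : (x, y) ∈ A) : x ≠ y :=
  (h.union_eq ▸ Or.inl hxy : (x, y) ∈ (diagonal Y)ᶜ)

theorem mem_right_of_notMem_left (h : IsOffDiagSeparation A B) (hxy : x ≠ y)
    (hA : (x, y) ∉ A) : (x, y) ∈ B :=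
  (h.union_eq.symm ▸ hxy : (x, y) ∈ A ∪ B).resolve_left hA

theorem mem_left_of_isPreconnected_fst (h : IsOffDiagSeparation A B) (hab : (a, b) ∈ A)
    {C : Set Y} (hC : IsPreconnected C) (haC : a ∈ C) (hbC : b ∉ C) (hx : x ∈ C) :
    (x, b) ∈ A := by
  have hsub : (fun c => (c, b)) '' C ⊆ A ∪ B := by
    rw [h.union_eq]
    rintro _ ⟨c, hc, rfl⟩ (hcb : c = b)
    exact hbC (hcb ▸ hc)
  have hCb : IsPreconnected ((fun c => (c, b)) '' C) :=
    hC.image _ (continuous_id.prodMk continuous_const).continuousOn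
  exact hCb.subset_left_of_subset_union h.isOpen_left h.isOpen_right h.disjoint hsub
    ⟨_, ⟨a, haC, rfl⟩, hab⟩ ⟨x, hx, rfl⟩

theorem mem_left_of_isPreconnected_snd (h : IsOffDiagSeparation A B) (hab : (a, b) ∈ A)
    {C : Set Y} (hC : IsPreconnected C) (hbC : b ∈ C) (haC : a ∉ C) (hz : z ∈ C) :
    (a, z) ∈ A :=
  h.preimage_swap.mem_left_of_isPreconnected_fst hab hC hbC haC hz

variable [LocallyConnectedSpace Y] [ConnectedSpace Y] [T1Space Y]

theorem mk_mem_left_of_symm_pair (h : IsOffDiagSeparation A B) (hab : (a, b) ∈ A)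
    (hba : (b, a) ∈ A) (hza : z ≠ a) : (a, z) ∈ A := by
  have hba' : b ≠ a := (h.ne_of_mem_left hab).symm
  by_cases hz : z ∈ connectedComponentIn {a}ᶜ b
  · exact h.mem_left_of_isPreconnected_snd hab isPreconnected_connectedComponentIn
      (mem_connectedComponentIn hba') (notMem_connectedComponentIn_compl_singleton a b) hz
  -- `z` lies in another component of `{a}ᶜ`, whose closure reaches `a` but not `b`.
  have hbC : b ∉ closure (connectedComponentIn {a}ᶜ z) := fun hb => by
    rcases closure_connectedComponentIn_subset isOpen_compl_singleton z hb with hb | hb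
    · exact hz (connectedComponentIn_eq hb ▸ mem_connectedComponentIn hza)
    · exact hba' (by simpa using hb)
  have hzC : z ∈ closure (connectedComponentIn {a}ᶜ z) :=
    subset_closure (mem_connectedComponentIn hza)
  have hbz : (b, z) ∈ A := h.mem_left_of_isPreconnected_snd hba
    isPreconnected_connectedComponentIn.closure
    (mem_closure_connectedComponentIn_compl_singleton hza) hbC hzC
  have hbz' : b ≠ z := fun e => hbC (e ▸ hzC)
  exact h.mem_left_of_isPreconnected_fst hbz isPreconnected_connectedComponentIn
    (mem_connectedComponentIn hbz') (notMem_connectedComponentIn_compl_singleton z b)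
    (mem_connectedComponentIn_compl_singleton_of_notMem hba' hza hz)

theorem compl_diagonal_subset_left_of_symm_pair (h : IsOffDiagSeparation A B)
    (hab : (a, b) ∈ A) (hba : (b, a) ∈ A) : (diagonal Y)ᶜ ⊆ A := by
  have hrow : ∀ z, z ≠ a → (a, z) ∈ A := fun z hz => h.mk_mem_left_of_symm_pair hab hba hz
  have hcol : ∀ z, z ≠ a → (z, a) ∈ A := fun z hz =>
    h.preimage_swap.mk_mem_left_of_symm_pair hba hab hz
  rintro ⟨x, y⟩ (hxy : x ≠ y)
  obtain rfl | hxa := eq_or_ne x a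
  · exact hrow y hxy.symm
  obtain rfl | hya := eq_or_ne y a
  · exact hcol x hxa
  by_cases hx : x ∈ connectedComponentIn {y}ᶜ a
  · exact h.mem_left_of_isPreconnected_fst (hrow y hya) isPreconnected_connectedComponentIn
      (mem_connectedComponentIn hya.symm) (notMem_connectedComponentIn_compl_singleton y a) hx
  · exact h.mem_left_of_isPreconnected_snd (hcol x hxa) isPreconnected_connectedComponentIn
      (mem_connectedComponentIn hxa.symm) (notMem_connectedComponentIn_compl_singleton x a)
      (mem_connectedComponentIn_compl_singleton_of_notMem hya.symm hxy hx)

theorem swap_notMem_left (h : IsOffDiagSeparation A B) (hB : B.Nonempty) (hab : (a, b) ∈ A) :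
    (b, a) ∉ A := fun hba => by
  obtain ⟨q, hq⟩ := hB
  have hq' : q ∈ (diagonal Y)ᶜ := h.union_eq ▸ Or.inr hq
  exact h.disjoint.ne_of_mem (h.compl_diagonal_subset_left_of_symm_pair hab hba hq') hq rfl

theorem mem_left_trans (h : IsOffDiagSeparation A B) (hB : B.Nonempty) (hxy : (x, y) ∈ A)
    (hyz : (y, z) ∈ A) : (x, z) ∈ A := by
  have hxz : x ≠ z := by
    rintro rfl
    exact h.swap_notMem_left hB hxy hyz
  by_cases hz : z ∈ connectedComponentIn {x}ᶜ y
  · exact h.mem_left_of_isPreconnected_snd hxy isPreconnected_connectedComponentIn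
      (mem_connectedComponentIn (h.ne_of_mem_left hxy).symm)
      (notMem_connectedComponentIn_compl_singleton x y) hz
  · exact h.mem_left_of_isPreconnected_fst hyz isPreconnected_connectedComponentIn
      (mem_connectedComponentIn (h.ne_of_mem_left hyz))
      (notMem_connectedComponentIn_compl_singleton z y)
      (mem_connectedComponentIn_compl_singleton_of_notMem (h.ne_of_mem_left hxy).symm
        hxz.symm hz)

theorem mem_left_or_swap_mem_left (h : IsOffDiagSeparation A B) (hA : A.Nonempty) (hxy : x ≠ y) :
    (x, y) ∈ A ∨ (y, x) ∈ A := by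
  by_contra! H
  exact h.symm.swap_notMem_left hA (h.mem_right_of_notMem_left hxy H.1)
    (h.mem_right_of_notMem_left hxy.symm H.2)

theorem isStrictTotalOrder (h : IsOffDiagSeparation A B) (hA : A.Nonempty) (hB : B.Nonempty) :
    IsStrictTotalOrder Y (fun x y => (x, y) ∈ A) where
  trichotomous _ _ hxy hyx := by_contra fun hne =>
    (h.mem_left_or_swap_mem_left hA hne).elim hxy hyx
  irrefl _ hx := h.ne_of_mem_left hx rfl
  trans _ _ _ := h.mem_left_trans hB

theorem nonempty_homeomorph_Icc [CompactSpace Y] [TopologicalSpace.SeparableSpace Y]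
    (h : IsOffDiagSeparation A B) (hA : A.Nonempty) (hB : B.Nonempty) :
    Nonempty (Y ≃ₜ Icc (0 : ℝ) 1) := by
  let := @linearOrderOfSTO Y _ (h.isStrictTotalOrder hA hB) (Classical.decRel _)
  have : OrderClosedTopology Y := by
    refine ⟨?_⟩
    simp only [← not_lt]
    exact (h.isOpen_left.preimage continuous_swap).isClosed_compl
  have : Nontrivial Y := let ⟨p, hp⟩ := hA; ⟨p.1, p.2, h.ne_of_mem_left hp⟩
  exact nonempty_homeomorph_Icc_of_orderClosedTopology

end IsOffDiagSeparation

theorem isConnected_compl_diagonal {Y : Type*} [TopologicalSpace Y] [CompactSpace Y]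
    [ConnectedSpace Y] [LocallyConnectedSpace Y] [T2Space Y] [TopologicalSpace.SeparableSpace Y]
    [Nontrivial Y] (hY : ¬ Nonempty (Y ≃ₜ Icc (0 : ℝ) 1)) : IsConnected (diagonal Y)ᶜ := by
  refine ⟨let ⟨x, y, hxy⟩ := exists_pair_ne Y; ⟨(x, y), hxy⟩, fun u v hu hv huv hu' hv' => ?_⟩
  by_contra H
  have hs : IsOpen (diagonal Y)ᶜ := isClosed_diagonal.isOpen_compl
  refine hY (IsOffDiagSeparation.nonempty_homeomorph_Icc
    ⟨hs.inter hu, hs.inter hv, ?_, ?_⟩ hu' hv')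
  · exact disjoint_left.2 fun p hpu hpv => H ⟨p, hpu.1, hpu.2, hpv.2⟩
  · rw [← inter_union_distrib_left, inter_eq_left.2 huv]

/-- Let `X`, `Y` be continua, with `Y` nondegenerate, locally connected and not an arc,
and let `f : X → Y` be a continuous surjective monotone open map. Then the diagonal
`Δ_X` is a nonblock subcontinuum of `X²`. -/
theorem stmt8 {X Y : Type*} [MetricSpace X] [CompactSpace X] [ConnectedSpace X]
    [MetricSpace Y] [CompactSpace Y] [ConnectedSpace Y] [LocallyConnectedSpace Y]
    (hndY : ∃ y₁ y₂ : Y, y₁ ≠ y₂)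
    (hnotarc : ¬ Nonempty (Y ≃ₜ (Set.Icc (0 : ℝ) 1)))
    (f : X → Y) (hf : Continuous f) (hsurj : Function.Surjective f)
    (hmono : ∀ B : Set Y, IsConnected B → IsConnected (f ⁻¹' B))
    (hopen : IsOpenMap f) :
    IsNonblockSubcontinuum {p : X × X | p.1 = p.2} := by
  obtain ⟨y₁, y₂, hy⟩ := hndY
  have : Nontrivial Y := ⟨⟨y₁, y₂, hy⟩⟩
  have : Nontrivial X := hsurj.nontrivial
  obtain ⟨L, hL, hLU, hLmono, hLeq⟩ := (isConnected_compl_diagonal hnotarc)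
    |>.exists_monotone_isSubcontinuum_iUnion_eq isClosed_diagonal.isOpen_compl
  have hfib : ∀ z : Y × Y, IsConnected (Prod.map f f ⁻¹' {z}) := by
    rintro ⟨a, b⟩
    rw [← singleton_prod_singleton, preimage_prod_map_prod]
    exact (hmono _ isConnected_singleton).prod (hmono _ isConnected_singleton)
  have hdense : Dense (Prod.map f f ⁻¹' (diagonal Y)ᶜ) :=
    (interior_eq_empty_iff_dense_compl.1 interior_diagonal_eq_empty).preimage (hopen.prodMap hopen)
  refine ⟨isSubcontinuum_diagonal, interior_diagonal_eq_empty, fun n => Prod.map f f ⁻¹' L n,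
    fun n => (hL n).preimage (hf.prodMap hf) hfib, fun n p hp hpd => hLU n hp (congrArg f hpd),
    fun n => preimage_mono (hLmono n.le_succ), ?_⟩
  rw [← preimage_iUnion, hLeq, hdense.closure_eq]
  exact subset_univ _
end

section
/- Let X be a continuum and let A be a nonempty closed subset of X. Then the following are equivalent: (1) T(A) = A; (2) for each open set U of X with A ⊆ U there is an open set V of X with A ⊆ V ⊆ U such that X \ V has only finitely many connected components; (3) for every subcontinuum B of X disjoint from A there exists a subcontinuum W of X with B ⊆ Int(W) and W ⊆ X \ A. -/
open Set Metric

/-- Jones's set function `T`: `T(A)` is the complement of the set of points lying in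
the interior of some subcontinuum disjoint from `A`. -/
def jonesT {Z : Type*} [TopologicalSpace Z] (A : Set Z) : Set Z :=
  {x | ∃ W : Set Z, IsSubcontinuum W ∧ x ∈ interior W ∧ W ⊆ Aᶜ}ᶜ

/-- The connected component of a point in a closed set is closed. -/
lemma isClosed_connectedComponentIn' {Z : Type*} [TopologicalSpace Z] {F : Set Z} {x : Z}
    (hF : IsClosed F) (hx : x ∈ F) : IsClosed (connectedComponentIn F x) := by
  have h1 : closure (connectedComponentIn F x) ⊆ connectedComponentIn F x := by
    apply IsPreconnected.subset_connectedComponentIn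
    · exact isPreconnected_connectedComponentIn.closure
    · exact subset_closure (mem_connectedComponentIn hx)
    · exact (closure_minimal (connectedComponentIn_subset F x) hF)
  rw [← closure_eq_iff_isClosed]
  exact h1.antisymm subset_closure

/-- Characterization of `T`-closed sets: for a nonempty closed `A ⊆ X`, the following
are equivalent: (1) `T(A) = A`; (2) every open `U ⊇ A` contains an open `V ⊇ A` whose
complement has only finitely many components; (3) every subcontinuum disjoint from `A`
is contained in the interior of a subcontinuum disjoint from `A`. -/
theorem stmt10 {X : Type*} [MetricSpace X] [CompactSpace X] [ConnectedSpace X]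
    (A : Set X) (hne : A.Nonempty) (hcl : IsClosed A) :
    [jonesT A = A,
     ∀ U : Set X, IsOpen U → A ⊆ U → ∃ V : Set X, IsOpen V ∧ A ⊆ V ∧ V ⊆ U ∧
       {C : Set X | ∃ x ∈ Vᶜ, C = connectedComponentIn Vᶜ x}.Finite,
     ∀ B : Set X, IsSubcontinuum B → B ∩ A = ∅ →
       ∃ W : Set X, IsSubcontinuum W ∧ B ⊆ interior W ∧ W ⊆ Aᶜ].TFAE := by
  tfae_have 1 → 3 := by
    intro h1 B hB hBA
    -- every point of B has a subcontinuum witness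
    have hBAc : B ⊆ Aᶜ := by
      intro b hb hbA
      exact absurd (mem_inter hb hbA) (by simp [hBA])
    have hwit : ∀ b : B, ∃ W : Set X, IsSubcontinuum W ∧ (b : X) ∈ interior W ∧ W ⊆ Aᶜ := by
      intro b
      have : (b : X) ∉ A := hBAc b.2
      have : (b : X) ∉ jonesT A := by rw [h1]; exact this
      simpa [jonesT] using this
    choose W hWsub hWint hWA using hwit
    obtain ⟨t, ht⟩ := hB.1.elim_finite_subcover (fun b : B => interior (W b))
      (fun b => isOpen_interior) (by intro x hx; exact mem_iUnion.2 ⟨⟨x, hx⟩, hWint ⟨x, hx⟩⟩)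
    obtain ⟨x₀, hx₀⟩ := hB.2.1
    set c : Set (Set X) := insert B ((fun i : B => B ∪ W i) '' ↑t) with hc
    have hcfin : c.Finite := (t.finite_toSet.image _).insert B
    refine ⟨⋃₀ c, ⟨?_, ?_, ?_⟩, ?_, ?_⟩
    · -- compact
      apply hcfin.isCompact_sUnion
      rintro s (rfl | ⟨i, hi, rfl⟩)
      · exact hB.1
      · exact hB.1.union (hWsub i).1
    · exact ⟨x₀, mem_sUnion.2 ⟨B, mem_insert _ _, hx₀⟩⟩
    · apply isPreconnected_sUnion x₀ c
      · rintro s (rfl | ⟨i, hi, rfl⟩)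
        · exact hx₀
        · exact Or.inl hx₀
      · rintro s (rfl | ⟨i, hi, rfl⟩)
        · exact hB.2.2
        · exact IsPreconnected.union (i : X) i.2
            (interior_subset (hWint i)) hB.2.2 (hWsub i).2.2
    · -- B ⊆ interior
      have hopen : IsOpen (⋃ i ∈ t, interior (W i)) := by
        exact isOpen_biUnion fun i _ => isOpen_interior
      have hsub : (⋃ i ∈ t, interior (W i)) ⊆ ⋃₀ c := by
        intro y hy
        obtain ⟨i, hi, hyi⟩ := mem_iUnion₂.1 hy
        exact mem_sUnion.2 ⟨B ∪ W i, mem_insert_of_mem _ ⟨i, hi, rfl⟩,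
          Or.inr (interior_subset hyi)⟩
      intro b hb
      exact interior_maximal hsub hopen (by simpa using ht hb)
    · rintro y hy
      obtain ⟨s, hs, hys⟩ := hy
      rcases hs with rfl | ⟨i, hi, rfl⟩
      · exact hBAc hys
      · rcases hys with h | h
        · exact hBAc h
        · exact hWA i h
  tfae_have 3 → 2 := by
    intro h3 U hU hAU
    have hK : IsCompact Uᶜ := hU.isClosed_compl.isCompact
    have hwit : ∀ k : (Uᶜ : Set X), ∃ W : Set X,
        IsSubcontinuum W ∧ (k : X) ∈ interior W ∧ W ⊆ Aᶜ := by
      intro k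
      have hkA : (k : X) ∉ A := fun h => k.2 (hAU h)
      obtain ⟨W, hW1, hW2, hW3⟩ := h3 {(k : X)}
        ⟨isCompact_singleton, isConnected_singleton⟩ (by simp [hkA])
      exact ⟨W, hW1, by simpa using hW2, hW3⟩
    choose W hWsub hWint hWA using hwit
    obtain ⟨t, ht⟩ := hK.elim_finite_subcover (fun k : (Uᶜ : Set X) => interior (W k))
      (fun k => isOpen_interior) (by intro x hx; exact mem_iUnion.2 ⟨⟨x, hx⟩, hWint ⟨x, hx⟩⟩)
    refine ⟨(⋃ i ∈ t, W i)ᶜ, ?_, ?_, ?_, ?_⟩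
    · exact (t.finite_toSet.isClosed_biUnion fun i _ => (hWsub i).1.isClosed).isOpen_compl
    · intro a ha h
      obtain ⟨i, hi, hai⟩ := mem_iUnion₂.1 h
      exact hWA i hai ha
    · apply compl_subset_comm.2
      intro x hx
      obtain ⟨i, hi, hxi⟩ := mem_iUnion₂.1 (ht hx)
      exact mem_iUnion₂.2 ⟨i, hi, interior_subset hxi⟩
    · rw [compl_compl]
      have hfin : ((fun i : (Uᶜ : Set X) => connectedComponentIn (⋃ j ∈ t, W j) (i : X))
          '' ↑t).Finite := t.finite_toSet.image _
      apply hfin.subset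
      rintro C ⟨x, hx, rfl⟩
      obtain ⟨i, hi, hxi⟩ := mem_iUnion₂.1 hx
      refine ⟨i, hi, ?_⟩
      have hWiC : W i ⊆ connectedComponentIn (⋃ j ∈ t, W j) x :=
        (hWsub i).2.2.subset_connectedComponentIn hxi
          (fun y hy => mem_iUnion₂.2 ⟨i, hi, hy⟩)
      exact (connectedComponentIn_eq (hWiC (interior_subset (hWint i)))).symm
  tfae_have 2 → 1 := by
    intro h2
    apply Subset.antisymm
    · -- jonesT A ⊆ A
      intro x hx
      by_contra hxA
      obtain ⟨U, O, hUo, hOo, hxU, hAO, hUO⟩ :=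
        SeparatedNhds.of_isCompact_isClosed isCompact_singleton hcl
          (disjoint_singleton_left.2 hxA)
      obtain ⟨V, hVo, hAV, hVO, hfin⟩ := h2 O hOo hAO
      have hxVc : x ∈ Vᶜ := by
        intro hxV
        exact hUO.ne_of_mem (hxU rfl) (hVO hxV) rfl
      set C := connectedComponentIn Vᶜ x with hC
      have hVcc : IsClosed (Vᶜ : Set X) := hVo.isClosed_compl
      -- the union of the other components is closed
      set S := {C' | ∃ y ∈ Vᶜ, C' = connectedComponentIn Vᶜ y} with hS
      have hSclosed : ∀ C' ∈ S, IsClosed C' := by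
        rintro C' ⟨y, hy, rfl⟩
        exact isClosed_connectedComponentIn' hVcc hy
      have hTfin : (S \ {C}).Finite := hfin.subset diff_subset
      have hTclosed : IsClosed (⋃₀ (S \ {C})) := by
        rw [sUnion_eq_biUnion]
        exact hTfin.isClosed_biUnion fun C' hC' => hSclosed C' hC'.1
      have hxT : x ∉ ⋃₀ (S \ {C}) := by
        rintro ⟨C', ⟨⟨y, hy, rfl⟩, hne'⟩, hxC'⟩
        exact hne' ((connectedComponentIn_eq hxC').symm ▸ rfl)
      have hmem : x ∈ interior C := by
        rw [mem_interior]
        refine ⟨U ∩ (⋃₀ (S \ {C}))ᶜ, ?_, hUo.inter hTclosed.isOpen_compl, ⟨hxU rfl, hxT⟩⟩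
        rintro y ⟨hyU, hyT⟩
        have hyVc : y ∈ Vᶜ := fun hyV => hUO.ne_of_mem hyU (hVO hyV) rfl
        have hin : connectedComponentIn Vᶜ y ∈ S := ⟨y, hyVc, rfl⟩
        by_cases hh : connectedComponentIn Vᶜ y = C
        · exact hh ▸ mem_connectedComponentIn hyVc
        · have hyS : y ∈ ⋃₀ (S \ {C}) :=
            mem_sUnion.2 ⟨_, ⟨hin, hh⟩, mem_connectedComponentIn hyVc⟩
          exact absurd hyS hyT
      simp only [jonesT, mem_compl_iff, mem_setOf_eq] at hx
      exact hx ⟨C, ⟨(isClosed_connectedComponentIn' hVcc hxVc).isCompact,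
        isConnected_connectedComponentIn_iff.2 hxVc⟩, hmem,
        (connectedComponentIn_subset _ _).trans (compl_subset_compl.2 hAV)⟩
    · -- A ⊆ jonesT A
      intro a ha
      simp only [jonesT, mem_compl_iff, mem_setOf_eq]
      rintro ⟨W, hW, haW, hWA⟩
      exact hWA (interior_subset haW) ha
  tfae_have 3 → 1 := by
    intro h3
    apply Subset.antisymm
    · intro x hx
      by_contra hxA
      obtain ⟨W, hW1, hW2, hW3⟩ := h3 {x} ⟨isCompact_singleton, isConnected_singleton⟩
        (by simp [hxA])
      exact hx ⟨W, hW1, by simpa using hW2, hW3⟩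
    · intro a ha
      simp only [jonesT, mem_compl_iff, mem_setOf_eq]
      rintro ⟨W, hW, haW, hWA⟩
      exact hWA (interior_subset haW) ha
  tfae_finish
end

section
/- Let X be a continuum and let A be a nonempty closed subset of X with T_X(A) ≠ A. Then for any continuum Y, the set A × Y is not a T-closed set in X × Y; that is, T_{X×Y}(A × Y) ≠ A × Y. -/
open Set Metric

/-! A subcontinuum of `X × Y` witnessing `(x, y) ∉ T(A × Y)` projects, under the open map
`Prod.fst`, to a subcontinuum of `X` witnessing `x ∉ T(A)`. Hence `T(A × Y) = A × Y` would
force `T(A) ⊆ A`, and `A ⊆ T(A)` always holds. -/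

section JonesT

variable {Z Z' : Type*} [TopologicalSpace Z] [TopologicalSpace Z']

theorem IsSubcontinuum.image {S : Set Z} (hS : IsSubcontinuum S) {f : Z → Z'}
    (hf : Continuous f) : IsSubcontinuum (f '' S) :=
  ⟨hS.1.image hf, hS.2.image f hf.continuousOn⟩

theorem subset_jonesT (A : Set Z) : A ⊆ jonesT A :=
  fun _ hx ⟨_, _, hint, hsub⟩ => hsub (interior_subset hint) hx

theorem preimage_jonesT_subset {f : Z → Z'} (hf : Continuous f) (hfo : IsOpenMap f)
    (A : Set Z') : f ⁻¹' jonesT A ⊆ jonesT (f ⁻¹' A) := by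
  rintro z hz ⟨W, hW, hzW, hWA⟩
  refine hz ⟨f '' W, hW.image hf, ?_, ?_⟩
  · exact hfo.image_interior_subset W (mem_image_of_mem f hzW)
  · rintro _ ⟨w, hw, rfl⟩
    exact hWA hw

theorem jonesT_eq_of_jonesT_preimage_eq {f : Z → Z'} (hf : Continuous f) (hfo : IsOpenMap f)
    (hsurj : Function.Surjective f) {A : Set Z'} (h : jonesT (f ⁻¹' A) = f ⁻¹' A) :
    jonesT A = A := by
  refine (subset_jonesT A).antisymm' fun x hx => ?_
  obtain ⟨z, rfl⟩ := hsurj x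
  exact h.subset (preimage_jonesT_subset hf hfo A hx)

end JonesT

theorem stmt13_general {X Y : Type*} [MetricSpace X]
    [MetricSpace Y] [ConnectedSpace Y]
    (A : Set X) (hTA : jonesT A ≠ A) :
    jonesT (A ×ˢ (Set.univ : Set Y)) ≠ A ×ˢ (Set.univ : Set Y) := by
  rw [prod_univ]
  exact fun h => hTA <| jonesT_eq_of_jonesT_preimage_eq continuous_fst isOpenMap_fst
    Prod.fst_surjective h

/-- Let `X` be a continuum and `A` a nonempty closed subset of `X` with
`T_X(A) ≠ A`. Then for any continuum `Y`, the set `A × Y` is not `T`-closed in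
`X × Y`. -/
theorem stmt13 {X Y : Type*} [MetricSpace X] [CompactSpace X] [ConnectedSpace X]
    [MetricSpace Y] [CompactSpace Y] [ConnectedSpace Y]
    (A : Set X) (hne : A.Nonempty) (hcl : IsClosed A) (hTA : jonesT A ≠ A) :
    jonesT (A ×ˢ (Set.univ : Set Y)) ≠ A ×ˢ (Set.univ : Set Y) :=
  stmt13_general A hTA
end

section
/- Let X be a continuum and let A be a subcontinuum of X with empty interior such that T(A) = A. Then the following are equivalent: (1) A is a subcontinuum of colocal connectedness of X; (2) X \ A is strongly continuumwise connected; (3) X \ A is continuumwise connected; (4) A is a nonblock subcontinuum of X; (5) A is a shore subcontinuum of X; (6) A is not a strong centre in X. -/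
open Set Metric

/-- The complement of `A` is continuumwise connected. -/
def ComplCWConnected {Z : Type*} [TopologicalSpace Z] (A : Set Z) : Prop :=
  ∀ x₁ ∈ Aᶜ, ∀ x₂ ∈ Aᶜ, ∃ W : Set Z,
    IsSubcontinuum W ∧ W ⊆ Aᶜ ∧ x₁ ∈ W ∧ x₂ ∈ W

/-- `A` is a shore subcontinuum. -/
def IsShoreSubcontinuum {Z : Type*} [MetricSpace Z] (A : Set Z) : Prop :=
  IsSubcontinuum A ∧ interior A = ∅ ∧
    ∀ ε : ℝ, 0 < ε → ∃ W : Set Z, IsSubcontinuum W ∧ W ⊆ Aᶜ ∧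
      ∀ z : Z, ∃ w ∈ W, dist z w < ε

/-- `A` is not a strong centre. -/
def IsNotStrongCentre {Z : Type*} [TopologicalSpace Z] (A : Set Z) : Prop :=
  IsSubcontinuum A ∧ interior A = ∅ ∧
    ∀ U V : Set Z, IsOpen U → U.Nonempty → IsOpen V → V.Nonempty →
      ∃ W : Set Z, IsSubcontinuum W ∧ (W ∩ U).Nonempty ∧ (W ∩ V).Nonempty ∧
        W ∩ A = ∅

/-- Let `X` be a continuum and `A` a `T`-closed subcontinuum of `X` with empty
interior. Then the six properties (colocal connectedness, strong continuumwise
connectedness of the complement, continuumwise connectedness of the complement,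
nonblock, shore, not a strong centre) are equivalent. -/
theorem stmt16 {X : Type*} [MetricSpace X] [CompactSpace X] [ConnectedSpace X]
    (A : Set X) (hA : IsSubcontinuum A) (hint : interior A = ∅)
    (hT : jonesT A = A) :
    [IsColocallyConnected A,
     ComplStronglyCWConnected A,
     ComplCWConnected A,
     IsNonblockSubcontinuum A,
     IsShoreSubcontinuum A,
     IsNotStrongCentre A].TFAE := by
  -- From `T(A) = A`: every point outside `A` has a continuum neighborhood inside `Aᶜ`.
  have hTkey : ∀ x ∈ Aᶜ, ∃ W : Set X, IsSubcontinuum W ∧ x ∈ interior W ∧ W ⊆ Aᶜ := by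
    intro x hx
    have hx' : x ∉ jonesT A := by rw [hT]; exact hx
    simpa [jonesT] using hx'
  have hAcne : Aᶜ.Nonempty := by
    rcases eq_empty_or_nonempty Aᶜ with h | h
    · exfalso
      have hAu : A = univ := compl_empty_iff.mp h
      rw [hAu, interior_univ] at hint
      exact (univ_nonempty (α := X)).ne_empty hint
    · exact h
  tfae_have 1 → 2 := by
    intro h1 x₁ hx₁ x₂ hx₂
    obtain ⟨W₁, hW₁, hx₁W, hW₁A⟩ := hTkey x₁ hx₁
    obtain ⟨W₂, hW₂, hx₂W, hW₂A⟩ := hTkey x₂ hx₂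
    have hUopen : IsOpen (W₁ ∪ W₂)ᶜ := (hW₁.1.isClosed.union hW₂.1.isClosed).isOpen_compl
    have hAU : A ⊆ (W₁ ∪ W₂)ᶜ := subset_compl_comm.mp (union_subset hW₁A hW₂A)
    obtain ⟨V, hVopen, hAV, hVU, hVc⟩ := h1 _ hUopen hAU
    have hWV : W₁ ∪ W₂ ⊆ Vᶜ := subset_compl_comm.mp hVU
    refine ⟨Vᶜ, ⟨hVopen.isClosed_compl.isCompact, ?_, hVc⟩, compl_subset_compl.mpr hAV, ?_, ?_⟩
    · exact ⟨x₁, hWV (Or.inl (interior_subset hx₁W))⟩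
    · exact interior_mono (fun z hz => hWV (Or.inl hz)) hx₁W
    · exact interior_mono (fun z hz => hWV (Or.inr hz)) hx₂W
  tfae_have 2 → 3 := by
    intro h2 x₁ hx₁ x₂ hx₂
    obtain ⟨W, hW, hWA, h1, h2'⟩ := h2 x₁ hx₁ x₂ hx₂
    exact ⟨W, hW, hWA, interior_subset h1, interior_subset h2'⟩
  tfae_have 3 → 2 := by
    intro h3 x₁ hx₁ x₂ hx₂
    obtain ⟨W₁, hW₁, hx₁W, hW₁A⟩ := hTkey x₁ hx₁
    obtain ⟨W₂, hW₂, hx₂W, hW₂A⟩ := hTkey x₂ hx₂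
    obtain ⟨W, hW, hWA, hx₁', hx₂'⟩ := h3 x₁ hx₁ x₂ hx₂
    refine ⟨W ∪ W₁ ∪ W₂, ⟨(hW.1.union hW₁.1).union hW₂.1, ?_⟩,
      union_subset (union_subset hWA hW₁A) hW₂A, ?_, ?_⟩
    · exact IsConnected.union ⟨x₂, Or.inl hx₂', interior_subset hx₂W⟩
        (IsConnected.union ⟨x₁, hx₁', interior_subset hx₁W⟩ hW.2 hW₁.2) hW₂.2
    · exact interior_mono (fun z hz => Or.inl (Or.inr hz)) hx₁W
    · exact interior_mono (fun z hz => Or.inr hz) hx₂W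
  tfae_have 2 → 1 := by
    intro h2 U hUopen hAU
    classical
    rcases eq_empty_or_nonempty Uᶜ with hUc | ⟨x₀, hx₀⟩
    · exact ⟨univ, isOpen_univ, subset_univ _, (compl_empty_iff.mp hUc).ge,
        by rw [compl_univ]; exact isPreconnected_empty⟩
    · have hx₀A : x₀ ∈ Aᶜ := fun h => hx₀ (hAU h)
      have hmem : ∀ x : ↥Uᶜ, (x : X) ∈ Aᶜ := fun x h => x.2 (hAU h)
      choose W hWsub hWA hx₀W hxW using fun x : ↥Uᶜ => h2 x₀ hx₀A x (hmem x)
      have hcover : Uᶜ ⊆ ⋃ x : ↥Uᶜ, interior (W x) := fun x hx =>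
        mem_iUnion.mpr ⟨⟨x, hx⟩, hxW _⟩
      obtain ⟨t, ht⟩ := (hUopen.isClosed_compl.isCompact).elim_finite_subcover
        (fun x : ↥Uᶜ => interior (W x)) (fun _ => isOpen_interior) hcover
      set x₀' : ↥Uᶜ := ⟨x₀, hx₀⟩
      set K : Set X := ⋃ x ∈ insert x₀' t, W x with hK
      have hKcomp : IsCompact K := (insert x₀' t).finite_toSet.isCompact_biUnion
        (fun x _ => (hWsub x).1)
      have hKconn : IsPreconnected K := by
        have h := isPreconnected_sUnion x₀ (W '' {x | x ∈ insert x₀' t})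
          (by rintro s ⟨k, _, rfl⟩; exact interior_subset (hx₀W k))
          (by rintro s ⟨k, _, rfl⟩; exact (hWsub k).2.isPreconnected)
        rwa [sUnion_image] at h
      have hKA : K ⊆ Aᶜ := iUnion₂_subset fun x _ => hWA x
      have hUK : Uᶜ ⊆ K := fun z hz => by
        obtain ⟨x, hxt, hzx⟩ := mem_iUnion₂.mp (ht hz)
        exact mem_iUnion₂.mpr ⟨x, Finset.mem_insert_of_mem hxt, interior_subset hzx⟩
      refine ⟨Kᶜ, hKcomp.isClosed.isOpen_compl, subset_compl_comm.mp hKA,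
        fun z hz => by_contra fun hzU => hz (hUK hzU), ?_⟩
      rw [compl_compl]
      exact hKconn
  tfae_have 3 → 4 := by
    intro h3
    obtain ⟨a₀, ha₀⟩ := hAcne
    obtain ⟨u, hu⟩ := TopologicalSpace.exists_dense_seq X
    have hg : ∀ n : ℕ, ∃ g : Set X, IsSubcontinuum g ∧ g ⊆ Aᶜ ∧ a₀ ∈ g ∧
        (u n ∈ Aᶜ → u n ∈ g) := by
      intro n
      by_cases h : u n ∈ Aᶜ
      · obtain ⟨W, hW, hWA, h1, h2⟩ := h3 a₀ ha₀ (u n) h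
        exact ⟨W, hW, hWA, h1, fun _ => h2⟩
      · exact ⟨{a₀}, ⟨isCompact_singleton, isConnected_singleton⟩,
          singleton_subset_iff.mpr ha₀, rfl, fun h' => absurd h' h⟩
    choose g hgc hgA hga₀ hgu using hg
    set L : ℕ → Set X := fun n => Nat.rec (g 0) (fun m Lm => Lm ∪ g (m + 1)) n with hLdef
    have hLzero : L 0 = g 0 := rfl
    have hLsucc : ∀ n, L (n + 1) = L n ∪ g (n + 1) := fun n => rfl
    have hLa₀ : ∀ n, a₀ ∈ L n := by
      intro n
      induction n with
      | zero => exact hga₀ 0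
      | succ m ih => exact Or.inl ih
    have hLc : ∀ n, IsSubcontinuum (L n) := by
      intro n
      induction n with
      | zero => exact hgc 0
      | succ m ih =>
        exact ⟨ih.1.union (hgc (m + 1)).1,
          IsConnected.union ⟨a₀, hLa₀ m, hga₀ (m + 1)⟩ ih.2 (hgc (m + 1)).2⟩
    have hLA : ∀ n, L n ⊆ Aᶜ := by
      intro n
      induction n with
      | zero => exact hgA 0
      | succ m ih => exact union_subset ih (hgA (m + 1))
    have hgL : ∀ n, g n ⊆ L n := by
      intro n
      cases n with
      | zero => exact subset_rfl
      | succ m => exact subset_union_right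
    refine ⟨hA, hint, L, hLc, hLA, fun n => subset_union_left, ?_⟩
    intro x hx
    rw [_root_.mem_closure_iff]
    intro O hO hxO
    have hOA : IsOpen (O ∩ Aᶜ) := hO.inter hA.1.isClosed.isOpen_compl
    obtain ⟨n, hn⟩ := hu.exists_mem_open hOA ⟨x, hxO, hx⟩
    exact ⟨u n, hn.1, mem_iUnion.mpr ⟨n, hgL n (hgu n hn.2)⟩⟩
  tfae_have 4 → 5 := by
    rintro ⟨_, _, L, hLc, hLA, hLmono', hLdense⟩
    refine ⟨hA, hint, fun ε hε => ?_⟩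
    have hmono : Monotone L := monotone_nat_of_le_succ (fun n => hLmono' n)
    have h1 : closure (Aᶜ) = univ := by rw [closure_compl, hint, compl_empty]
    have h2 : closure (Aᶜ) ⊆ closure (⋃ n, L n) := by
      rw [← closure_closure (s := ⋃ n, L n)]
      exact closure_mono hLdense
    have hcl : ∀ z : X, z ∈ closure (⋃ n, L n) := fun z => h2 (h1 ▸ mem_univ z)
    have hcover : (univ : Set X) ⊆ ⋃ w : ↥(⋃ n, L n), ball (w : X) ε := by
      intro z _
      obtain ⟨w, hw1, hw2⟩ := Metric.mem_closure_iff.mp (hcl z) ε hε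
      exact mem_iUnion.mpr ⟨⟨w, hw1⟩, mem_ball.mpr hw2⟩
    obtain ⟨t, ht⟩ := isCompact_univ.elim_finite_subcover
      (fun w : ↥(⋃ n, L n) => ball (w : X) ε) (fun _ => isOpen_ball) hcover
    have hwn : ∀ w : ↥(⋃ n, L n), ∃ n, (w : X) ∈ L n := fun w => mem_iUnion.mp w.2
    choose nf hnf using hwn
    set N := t.sup nf with hN
    refine ⟨L N, hLc N, hLA N, fun z => ?_⟩
    obtain ⟨w, hwt, hzw⟩ := mem_iUnion₂.mp (ht (mem_univ z))
    exact ⟨w, hmono (Finset.le_sup hwt) (hnf w), mem_ball.mp hzw⟩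
  tfae_have 5 → 6 := by
    rintro ⟨_, _, h5⟩
    refine ⟨hA, hint, fun U V hU hUne hV hVne => ?_⟩
    obtain ⟨uu, huu⟩ := hUne
    obtain ⟨vv, hvv⟩ := hVne
    obtain ⟨εu, hεu, hbu⟩ := Metric.isOpen_iff.mp hU uu huu
    obtain ⟨εv, hεv, hbv⟩ := Metric.isOpen_iff.mp hV vv hvv
    obtain ⟨W, hWc, hWA, hWd⟩ := h5 (min εu εv) (lt_min hεu hεv)
    obtain ⟨wu, hwu, hdwu⟩ := hWd uu
    obtain ⟨wv, hwv, hdwv⟩ := hWd vv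
    refine ⟨W, hWc,
      ⟨wu, hwu, hbu (mem_ball'.mpr (hdwu.trans_le (min_le_left _ _)))⟩,
      ⟨wv, hwv, hbv (mem_ball'.mpr (hdwv.trans_le (min_le_right _ _)))⟩, ?_⟩
    exact disjoint_iff_inter_eq_empty.mp (subset_compl_iff_disjoint_right.mp hWA)
  tfae_have 6 → 3 := by
    rintro ⟨_, _, h6⟩ x₁ hx₁ x₂ hx₂
    obtain ⟨W₁, hW₁, hx₁W, hW₁A⟩ := hTkey x₁ hx₁
    obtain ⟨W₂, hW₂, hx₂W, hW₂A⟩ := hTkey x₂ hx₂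
    obtain ⟨W, hWc, ⟨p, hpW, hp1⟩, ⟨q, hqW, hq2⟩, hWA⟩ := h6 (interior W₁) (interior W₂)
      isOpen_interior ⟨x₁, hx₁W⟩ isOpen_interior ⟨x₂, hx₂W⟩
    have hWA' : W ⊆ Aᶜ := subset_compl_iff_disjoint_right.mpr
      (disjoint_iff_inter_eq_empty.mpr hWA)
    refine ⟨W ∪ W₁ ∪ W₂, ⟨(hWc.1.union hW₁.1).union hW₂.1, ?_⟩,
      union_subset (union_subset hWA' hW₁A) hW₂A,
      Or.inl (Or.inr (interior_subset hx₁W)), Or.inr (interior_subset hx₂W)⟩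
    exact IsConnected.union ⟨q, Or.inl hqW, interior_subset hq2⟩
      (IsConnected.union ⟨p, hpW, interior_subset hp1⟩ hWc.2 hW₁.2) hW₂.2
  tfae_finish
end
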